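/- arXiv:2601.15377 — 8 statements merged into one kernel-verified Lean document; each statement's English description precedes it below -/
import Mathlib

section
/- For any finite simple graph G, any complex edge weights w, and any finite set 𝒫 of plaquettes of G, the generalized Rokhsar–Kivelson Hamiltonian H = ∑_{p∈𝒫} P_p acting on the space of complex functions on perfect matchings satisfies: (i) ⟨f, H f⟩ is a nonnegative real number for every f (H is positive semidefinite); and (ii) H ψ_w = 0, where ψ_w(M) = ∏_{e∈M} w(e) is the weighted RK wavefunction. In particular, ψ_w is a ground state of H with ground state energy 0. -/
open scoped BigOperators

namespace RK

variable {V : Type*} [Fintype V] [DecidableEq V]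

/-- A plaquette of a simple graph `G`: four distinct vertices `v₁, v₂, v₃, v₄`
forming a 4-cycle in `G`. -/
structure Plaquette (G : SimpleGraph V) where
  v1 : V
  v2 : V
  v3 : V
  v4 : V
  h12 : v1 ≠ v2
  h13 : v1 ≠ v3
  h14 : v1 ≠ v4
  h23 : v2 ≠ v3
  h24 : v2 ≠ v4
  h34 : v3 ≠ v4
  adj12 : G.Adj v1 v2
  adj23 : G.Adj v2 v3
  adj34 : G.Adj v3 v4
  adj41 : G.Adj v4 v1

variable {G : SimpleGraph V}

/-- The edge `p₁ = {v₁, v₂}` of a plaquette. -/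
def Plaquette.e1 (p : Plaquette G) : Sym2 V := s(p.v1, p.v2)

/-- The edge `p₂ = {v₂, v₃}` of a plaquette. -/
def Plaquette.e2 (p : Plaquette G) : Sym2 V := s(p.v2, p.v3)

/-- The edge `p₃ = {v₃, v₄}` of a plaquette. -/
def Plaquette.e3 (p : Plaquette G) : Sym2 V := s(p.v3, p.v4)

/-- The edge `p₄ = {v₄, v₁}` of a plaquette. -/
def Plaquette.e4 (p : Plaquette G) : Sym2 V := s(p.v4, p.v1)

/-- The four edges of a plaquette, as a finset. -/
def Plaquette.edges (p : Plaquette G) : Finset (Sym2 V) := {p.e1, p.e2, p.e3, p.e4}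

/-- `M` is a perfect matching of `G`: a finset of edges of `G` such that every vertex
belongs to exactly one edge of `M`. -/
def IsPM (G : SimpleGraph V) (M : Finset (Sym2 V)) : Prop :=
  (∀ e ∈ M, e ∈ G.edgeSet) ∧ ∀ v : V, ∃! e, e ∈ M ∧ v ∈ e

/-- The type of perfect matchings of `G`. -/
def PM (G : SimpleGraph V) := {M : Finset (Sym2 V) // IsPM G M}

/-- `a_p = w p₂ · w p₄`. -/
def aw (w : Sym2 V → ℂ) (p : Plaquette G) : ℂ := w p.e2 * w p.e4

/-- `b_p = w p₁ · w p₃`. -/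
def bw (w : Sym2 V → ℂ) (p : Plaquette G) : ℂ := w p.e1 * w p.e3

/-- The plaquette operator `P_p`, expressed using a flip map `Φ` on perfect matchings
(`Φ p M` is required to be the symmetric difference `M Δ {p₁, p₂, p₃, p₄}` whenever the
flip is admissible, i.e. whenever `p₁, p₃ ∈ M` or `p₂, p₄ ∈ M`):
`(P_p f)(M) = |a_p|² f(M) − conj(a_p)·b_p·f(φ_p M)` if `p₁, p₃ ∈ M`;
`(P_p f)(M) = |b_p|² f(M) − conj(b_p)·a_p·f(φ_p M)` if `p₂, p₄ ∈ M`; and `0` otherwise. -/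
noncomputable def Pp (w : Sym2 V → ℂ) (Φ : Plaquette G → PM G → PM G) (p : Plaquette G)
    (f : PM G → ℂ) (M : PM G) : ℂ :=
  if p.e1 ∈ M.1 ∧ p.e3 ∈ M.1 then
    (‖aw w p‖ : ℂ) ^ 2 * f M - (starRingEnd ℂ) (aw w p) * bw w p * f (Φ p M)
  else if p.e2 ∈ M.1 ∧ p.e4 ∈ M.1 then
    (‖bw w p‖ : ℂ) ^ 2 * f M - (starRingEnd ℂ) (bw w p) * aw w p * f (Φ p M)
  else 0

/-- The generalized Rokhsar–Kivelson Hamiltonian `H = ∑_{p ∈ Plaqs} P_p`. -/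
noncomputable def Ham (w : Sym2 V → ℂ) (Φ : Plaquette G → PM G → PM G) (Plaqs : Finset (Plaquette G))
    (f : PM G → ℂ) (M : PM G) : ℂ :=
  ∑ p ∈ Plaqs, Pp w Φ p f M

/-- The weighted RK wavefunction `ψ_w(M) = ∏_{e ∈ M} w e`. -/
def psi (w : Sym2 V → ℂ) (M : PM G) : ℂ := ∏ e ∈ M.1, w e

end RK

namespace RK

variable {V : Type*} [Fintype V] [DecidableEq V] {G : SimpleGraph V}

lemma Plaquette.e1_ne_e2 (p : Plaquette G) : p.e1 ≠ p.e2 := by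
  intro h
  rw [Plaquette.e1, Plaquette.e2, Sym2.eq_iff] at h
  rcases h with ⟨h, _⟩ | h2
  · exact p.h12 h
  · exact p.h13 h2.1

lemma Plaquette.e1_ne_e3 (p : Plaquette G) : p.e1 ≠ p.e3 := by
  intro h
  rw [Plaquette.e1, Plaquette.e3, Sym2.eq_iff] at h
  rcases h with ⟨h, _⟩ | h2
  · exact p.h13 h
  · exact p.h14 h2.1

lemma Plaquette.e1_ne_e4 (p : Plaquette G) : p.e1 ≠ p.e4 := by
  intro h
  rw [Plaquette.e1, Plaquette.e4, Sym2.eq_iff] at h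
  rcases h with ⟨h, _⟩ | h2
  · exact p.h14 h
  · exact p.h24 h2.2

lemma Plaquette.e2_ne_e3 (p : Plaquette G) : p.e2 ≠ p.e3 := by
  intro h
  rw [Plaquette.e2, Plaquette.e3, Sym2.eq_iff] at h
  rcases h with ⟨h, _⟩ | h2
  · exact p.h23 h
  · exact p.h24 h2.1

lemma Plaquette.e2_ne_e4 (p : Plaquette G) : p.e2 ≠ p.e4 := by
  intro h
  rw [Plaquette.e2, Plaquette.e4, Sym2.eq_iff] at h
  rcases h with ⟨h, _⟩ | h2
  · exact p.h24 h
  · exact p.h12 h2.1.symm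

lemma Plaquette.e3_ne_e4 (p : Plaquette G) : p.e3 ≠ p.e4 := by
  intro h
  rw [Plaquette.e3, Plaquette.e4, Sym2.eq_iff] at h
  rcases h with ⟨h, _⟩ | h2
  · exact p.h34 h
  · exact p.h13 h2.1.symm

lemma mem_edges_iff (p : Plaquette G) (x : Sym2 V) :
    x ∈ p.edges ↔ x = p.e1 ∨ x = p.e2 ∨ x = p.e3 ∨ x = p.e4 := by
  simp [Plaquette.edges]

/-- If `e ∈ M`, `v ∈ e`, `v ∈ e'`, `e' ≠ e`, then `e' ∉ M`. -/
lemma not_mem_of_shared {M : Finset (Sym2 V)} (hM : IsPM G M) {e e' : Sym2 V} {v : V}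
    (he : e ∈ M) (hv : v ∈ e) (hv' : v ∈ e') (hne : e' ≠ e) : e' ∉ M := by
  intro h'
  exact hne ((hM.2 v).unique ⟨h', hv'⟩ ⟨he, hv⟩)

lemma case1_not2 (p : Plaquette G) (M : PM G) (h1 : p.e1 ∈ M.1) :
    p.e2 ∉ M.1 ∧ p.e4 ∉ M.1 := by
  constructor
  · exact not_mem_of_shared (v := p.v2) M.2 h1 (by simp [Plaquette.e1]) (by simp [Plaquette.e2])
      (Ne.symm p.e1_ne_e2)
  · exact not_mem_of_shared (v := p.v1) M.2 h1 (by simp [Plaquette.e1]) (by simp [Plaquette.e4])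
      (Ne.symm p.e1_ne_e4)

lemma case2_not1 (p : Plaquette G) (M : PM G) (h2 : p.e2 ∈ M.1) :
    p.e1 ∉ M.1 ∧ p.e3 ∉ M.1 := by
  constructor
  · exact not_mem_of_shared (v := p.v2) M.2 h2 (by simp [Plaquette.e2]) (by simp [Plaquette.e1])
      p.e1_ne_e2
  · exact not_mem_of_shared (v := p.v3) M.2 h2 (by simp [Plaquette.e2]) (by simp [Plaquette.e3])
      (Ne.symm p.e2_ne_e3)

section Flip

variable (w : Sym2 V → ℂ) (Φ : Plaquette G → PM G → PM G)
variable (hΦ : ∀ (p : Plaquette G) (M : PM G),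
      ((p.e1 ∈ M.1 ∧ p.e3 ∈ M.1) ∨ (p.e2 ∈ M.1 ∧ p.e4 ∈ M.1)) →
      (Φ p M).1 = symmDiff M.1 p.edges)

include hΦ

lemma flip_mem1 (p : Plaquette G) (M : PM G) (h : p.e1 ∈ M.1 ∧ p.e3 ∈ M.1) :
    p.e2 ∈ (Φ p M).1 ∧ p.e4 ∈ (Φ p M).1 ∧ p.e1 ∉ (Φ p M).1 ∧ p.e3 ∉ (Φ p M).1 := by
  obtain ⟨hn2, hn4⟩ := case1_not2 p M h.1
  rw [hΦ p M (Or.inl h)]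
  refine ⟨?_, ?_, ?_, ?_⟩ <;>
    simp [Finset.mem_symmDiff, mem_edges_iff, h.1, h.2, hn2, hn4,
      p.e1_ne_e2, p.e1_ne_e3, p.e1_ne_e4, p.e2_ne_e3, p.e2_ne_e4, p.e3_ne_e4,
      (p.e1_ne_e2).symm, (p.e1_ne_e3).symm, (p.e1_ne_e4).symm,
      (p.e2_ne_e3).symm, (p.e2_ne_e4).symm, (p.e3_ne_e4).symm]

lemma flip_mem2 (p : Plaquette G) (M : PM G) (h : p.e2 ∈ M.1 ∧ p.e4 ∈ M.1) :
    p.e1 ∈ (Φ p M).1 ∧ p.e3 ∈ (Φ p M).1 ∧ p.e2 ∉ (Φ p M).1 ∧ p.e4 ∉ (Φ p M).1 := by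
  obtain ⟨hn1, hn3⟩ := case2_not1 p M h.1
  rw [hΦ p M (Or.inr h)]
  refine ⟨?_, ?_, ?_, ?_⟩ <;>
    simp [Finset.mem_symmDiff, mem_edges_iff, h.1, h.2, hn1, hn3,
      p.e1_ne_e2, p.e1_ne_e3, p.e1_ne_e4, p.e2_ne_e3, p.e2_ne_e4, p.e3_ne_e4,
      (p.e1_ne_e2).symm, (p.e1_ne_e3).symm, (p.e1_ne_e4).symm,
      (p.e2_ne_e3).symm, (p.e2_ne_e4).symm, (p.e3_ne_e4).symm]

lemma flip_flip1 (p : Plaquette G) (M : PM G) (h : p.e1 ∈ M.1 ∧ p.e3 ∈ M.1) :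
    Φ p (Φ p M) = M := by
  obtain ⟨h2, h4, _, _⟩ := flip_mem1 Φ hΦ p M h
  have : (Φ p (Φ p M)).1 = M.1 := by
    rw [hΦ p (Φ p M) (Or.inr ⟨h2, h4⟩), hΦ p M (Or.inl h)]
    exact symmDiff_symmDiff_cancel_right _ _
  exact Subtype.ext this

lemma flip_flip2 (p : Plaquette G) (M : PM G) (h : p.e2 ∈ M.1 ∧ p.e4 ∈ M.1) :
    Φ p (Φ p M) = M := by
  obtain ⟨h1, h3, _, _⟩ := flip_mem2 Φ hΦ p M h
  have : (Φ p (Φ p M)).1 = M.1 := by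
    rw [hΦ p (Φ p M) (Or.inl ⟨h1, h3⟩), hΦ p M (Or.inr h)]
    exact symmDiff_symmDiff_cancel_right _ _
  exact Subtype.ext this

lemma psi_flip1 (p : Plaquette G) (M : PM G) (h : p.e1 ∈ M.1 ∧ p.e3 ∈ M.1) :
    aw w p * psi w M = bw w p * psi w (Φ p M) := by
  obtain ⟨hn2, hn4⟩ := case1_not2 p M h.1
  obtain ⟨f2, f4, f1, f3⟩ := flip_mem1 Φ hΦ p M h
  have key : insert p.e2 (insert p.e4 M.1) = insert p.e1 (insert p.e3 (Φ p M).1) := by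
    ext x
    rw [hΦ p M (Or.inl h)]
    simp only [Finset.mem_insert, Finset.mem_symmDiff, mem_edges_iff]
    by_cases hx1 : x = p.e1 <;> by_cases hx2 : x = p.e2 <;> by_cases hx3 : x = p.e3 <;>
      by_cases hx4 : x = p.e4 <;> by_cases hxM : x ∈ M.1 <;>
      simp_all [h.1, h.2, hn2, hn4]
  have lhs : aw w p * psi w M = ∏ e ∈ insert p.e2 (insert p.e4 M.1), w e := by
    rw [Finset.prod_insert (by simp [hn2, hn4, p.e2_ne_e4]),
      Finset.prod_insert hn4, aw, psi]; ring
  have rhs : bw w p * psi w (Φ p M) = ∏ e ∈ insert p.e1 (insert p.e3 (Φ p M).1), w e := by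
    rw [Finset.prod_insert (by simp [f1, f3, p.e1_ne_e3]),
      Finset.prod_insert f3, bw, psi]; ring
  rw [lhs, rhs, key]

lemma psi_flip2 (p : Plaquette G) (M : PM G) (h : p.e2 ∈ M.1 ∧ p.e4 ∈ M.1) :
    bw w p * psi w M = aw w p * psi w (Φ p M) := by
  obtain ⟨hn1, hn3⟩ := case2_not1 p M h.1
  obtain ⟨f1, f3, f2, f4⟩ := flip_mem2 Φ hΦ p M h
  have key : insert p.e1 (insert p.e3 M.1) = insert p.e2 (insert p.e4 (Φ p M).1) := by
    ext x
    rw [hΦ p M (Or.inr h)]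
    simp only [Finset.mem_insert, Finset.mem_symmDiff, mem_edges_iff]
    by_cases hx1 : x = p.e1 <;> by_cases hx2 : x = p.e2 <;> by_cases hx3 : x = p.e3 <;>
      by_cases hx4 : x = p.e4 <;> by_cases hxM : x ∈ M.1 <;>
      simp_all [h.1, h.2, hn1, hn3]
  have lhs : bw w p * psi w M = ∏ e ∈ insert p.e1 (insert p.e3 M.1), w e := by
    rw [Finset.prod_insert (by simp [hn1, hn3, p.e1_ne_e3]),
      Finset.prod_insert hn3, bw, psi]; ring
  have rhs : aw w p * psi w (Φ p M) = ∏ e ∈ insert p.e2 (insert p.e4 (Φ p M).1), w e := by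
    rw [Finset.prod_insert (by simp [f2, f4, p.e2_ne_e4]),
      Finset.prod_insert f4, aw, psi]; ring
  rw [lhs, rhs, key]

end Flip

lemma conj_mul_self (z : ℂ) : (starRingEnd ℂ) z * z = ((‖z‖ ^ 2 : ℝ) : ℂ) := by
  rw [mul_comm, Complex.mul_conj, Complex.normSq_eq_norm_sq]

lemma scalar_identity (a b x y : ℂ) :
    (starRingEnd ℂ) x * ((‖a‖ : ℂ) ^ 2 * x - (starRingEnd ℂ) a * b * y) +
      (starRingEnd ℂ) y * ((‖b‖ : ℂ) ^ 2 * y - (starRingEnd ℂ) b * a * x) =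
      ((‖a * x - b * y‖ ^ 2 : ℝ) : ℂ) := by
  rw [← conj_mul_self (a * x - b * y), map_sub, map_mul, map_mul]
  have ha : ((‖a‖ : ℂ)) ^ 2 = (starRingEnd ℂ) a * a := by
    rw [conj_mul_self]; push_cast; ring
  have hb : ((‖b‖ : ℂ)) ^ 2 = (starRingEnd ℂ) b * b := by
    rw [conj_mul_self]; push_cast; ring
  rw [ha, hb]; ring

end RK

open RK in
/-- The generalized RK Hamiltonian `H = ∑_{p ∈ Plaqs} P_p`, acting on complex functions on
perfect matchings with inner product `⟪f, g⟫ = ∑_M conj (f M) · g M`, is positive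
semidefinite, and annihilates the weighted RK wavefunction `ψ_w(M) = ∏_{e ∈ M} w e`.
In particular `ψ_w` is a ground state of `H` with ground state energy `0`. -/
theorem stmt_4 {V : Type*} [Fintype V] [DecidableEq V] (G : SimpleGraph V)
    [Fintype (PM G)] (w : Sym2 V → ℂ) (Plaqs : Finset (Plaquette G))
    (Φ : Plaquette G → PM G → PM G)
    (hΦ : ∀ (p : Plaquette G) (M : PM G),
      ((p.e1 ∈ M.1 ∧ p.e3 ∈ M.1) ∨ (p.e2 ∈ M.1 ∧ p.e4 ∈ M.1)) →
      (Φ p M).1 = symmDiff M.1 p.edges) :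
    (∀ f : PM G → ℂ,
      0 ≤ (∑ M : PM G, (starRingEnd ℂ) (f M) * Ham w Φ Plaqs f M).re ∧
        (∑ M : PM G, (starRingEnd ℂ) (f M) * Ham w Φ Plaqs f M).im = 0) ∧
    (∀ M : PM G, Ham w Φ Plaqs (psi w) M = 0) := by
  classical
  have conj_norm : ∀ z : ℂ, ((‖z‖ : ℂ)) ^ 2 = (starRingEnd ℂ) z * z := by
    intro z; rw [conj_mul_self]; push_cast; ring
  constructor
  · intro f
    have hPp : ∀ p : Plaquette G,
        (∑ M : PM G, (starRingEnd ℂ) (f M) * Pp w Φ p f M) =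
        ((∑ M ∈ Finset.univ.filter (fun M : PM G => p.e1 ∈ M.1 ∧ p.e3 ∈ M.1),
            ‖aw w p * f M - bw w p * f (Φ p M)‖ ^ 2 : ℝ) : ℂ) := by
      intro p
      have hsplit : ∀ M : PM G, (starRingEnd ℂ) (f M) * Pp w Φ p f M =
          (if p.e1 ∈ M.1 ∧ p.e3 ∈ M.1 then
            (starRingEnd ℂ) (f M) * ((‖aw w p‖ : ℂ) ^ 2 * f M -
              (starRingEnd ℂ) (aw w p) * bw w p * f (Φ p M)) else 0) +
          (if p.e2 ∈ M.1 ∧ p.e4 ∈ M.1 then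
            (starRingEnd ℂ) (f M) * ((‖bw w p‖ : ℂ) ^ 2 * f M -
              (starRingEnd ℂ) (bw w p) * aw w p * f (Φ p M)) else 0) := by
        intro M
        by_cases h1 : p.e1 ∈ M.1 ∧ p.e3 ∈ M.1
        · have h2 : ¬(p.e2 ∈ M.1 ∧ p.e4 ∈ M.1) := by
            intro h2; exact (case1_not2 p M h1.1).1 h2.1
          rw [Pp]; simp [h1, h2]
        · by_cases h2 : p.e2 ∈ M.1 ∧ p.e4 ∈ M.1
          · rw [Pp]; simp [h1, h2]
          · rw [Pp]; simp [h1, h2]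
      calc ∑ M : PM G, (starRingEnd ℂ) (f M) * Pp w Φ p f M
          = (∑ M : PM G, if p.e1 ∈ M.1 ∧ p.e3 ∈ M.1 then
              (starRingEnd ℂ) (f M) * ((‖aw w p‖ : ℂ) ^ 2 * f M -
                (starRingEnd ℂ) (aw w p) * bw w p * f (Φ p M)) else 0) +
            (∑ M : PM G, if p.e2 ∈ M.1 ∧ p.e4 ∈ M.1 then
              (starRingEnd ℂ) (f M) * ((‖bw w p‖ : ℂ) ^ 2 * f M -
                (starRingEnd ℂ) (bw w p) * aw w p * f (Φ p M)) else 0) := by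
            rw [← Finset.sum_add_distrib]
            exact Finset.sum_congr rfl fun M _ => hsplit M
        _ = (∑ M ∈ Finset.univ.filter (fun M : PM G => p.e1 ∈ M.1 ∧ p.e3 ∈ M.1),
              (starRingEnd ℂ) (f M) * ((‖aw w p‖ : ℂ) ^ 2 * f M -
                (starRingEnd ℂ) (aw w p) * bw w p * f (Φ p M))) +
            (∑ M ∈ Finset.univ.filter (fun M : PM G => p.e2 ∈ M.1 ∧ p.e4 ∈ M.1),
              (starRingEnd ℂ) (f M) * ((‖bw w p‖ : ℂ) ^ 2 * f M -
                (starRingEnd ℂ) (bw w p) * aw w p * f (Φ p M))) := by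
            rw [Finset.sum_filter, Finset.sum_filter]
        _ = (∑ M ∈ Finset.univ.filter (fun M : PM G => p.e1 ∈ M.1 ∧ p.e3 ∈ M.1),
              (starRingEnd ℂ) (f M) * ((‖aw w p‖ : ℂ) ^ 2 * f M -
                (starRingEnd ℂ) (aw w p) * bw w p * f (Φ p M))) +
            (∑ M ∈ Finset.univ.filter (fun M : PM G => p.e1 ∈ M.1 ∧ p.e3 ∈ M.1),
              (starRingEnd ℂ) (f (Φ p M)) * ((‖bw w p‖ : ℂ) ^ 2 * f (Φ p M) -
                (starRingEnd ℂ) (bw w p) * aw w p * f M)) := by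
            congr 1
            refine Finset.sum_nbij' (Φ p) (Φ p) ?_ ?_ ?_ ?_ ?_
            · intro M hM
              simp only [Finset.mem_filter, Finset.mem_univ, true_and] at hM ⊢
              obtain ⟨a, b, _, _⟩ := flip_mem2 Φ hΦ p M hM
              exact ⟨a, b⟩
            · intro M hM
              simp only [Finset.mem_filter, Finset.mem_univ, true_and] at hM ⊢
              obtain ⟨a, b, _, _⟩ := flip_mem1 Φ hΦ p M hM
              exact ⟨a, b⟩
            · intro M hM
              simp only [Finset.mem_filter, Finset.mem_univ, true_and] at hM
              exact flip_flip2 Φ hΦ p M hM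
            · intro M hM
              simp only [Finset.mem_filter, Finset.mem_univ, true_and] at hM
              exact flip_flip1 Φ hΦ p M hM
            · intro M hM
              simp only [Finset.mem_filter, Finset.mem_univ, true_and] at hM
              rw [flip_flip2 Φ hΦ p M hM]
        _ = ∑ M ∈ Finset.univ.filter (fun M : PM G => p.e1 ∈ M.1 ∧ p.e3 ∈ M.1),
              ((‖aw w p * f M - bw w p * f (Φ p M)‖ ^ 2 : ℝ) : ℂ) := by
            rw [← Finset.sum_add_distrib]
            exact Finset.sum_congr rfl fun M _ => scalar_identity _ _ _ _
        _ = _ := by push_cast; ring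
    have hHam : (∑ M : PM G, (starRingEnd ℂ) (f M) * Ham w Φ Plaqs f M) =
        ((∑ p ∈ Plaqs, ∑ M ∈ Finset.univ.filter (fun M : PM G => p.e1 ∈ M.1 ∧ p.e3 ∈ M.1),
            ‖aw w p * f M - bw w p * f (Φ p M)‖ ^ 2 : ℝ) : ℂ) := by
      simp only [Ham, Finset.mul_sum]
      rw [Finset.sum_comm]
      push_cast
      exact Finset.sum_congr rfl fun p _ => by rw [hPp p]; push_cast; ring
    rw [hHam]
    constructor
    · rw [Complex.ofReal_re]
      exact Finset.sum_nonneg fun p _ => Finset.sum_nonneg fun M _ => sq_nonneg _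
    · exact Complex.ofReal_im _
  · intro M
    rw [Ham]
    refine Finset.sum_eq_zero fun p _ => ?_
    rw [Pp]
    by_cases h1 : p.e1 ∈ M.1 ∧ p.e3 ∈ M.1
    · simp only [h1, if_true]
      rw [conj_norm]
      have := psi_flip1 w Φ hΦ p M h1
      calc (starRingEnd ℂ) (aw w p) * aw w p * psi w M -
            (starRingEnd ℂ) (aw w p) * bw w p * psi w (Φ p M)
          = (starRingEnd ℂ) (aw w p) *
              (aw w p * psi w M - bw w p * psi w (Φ p M)) := by ring
        _ = 0 := by rw [this]; ring
    · simp only [h1, if_false]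
      by_cases h2 : p.e2 ∈ M.1 ∧ p.e4 ∈ M.1
      · simp only [h2, if_true]
        rw [conj_norm]
        have := psi_flip2 w Φ hΦ p M h2
        calc (starRingEnd ℂ) (bw w p) * bw w p * psi w M -
              (starRingEnd ℂ) (bw w p) * aw w p * psi w (Φ p M)
            = (starRingEnd ℂ) (bw w p) *
                (bw w p * psi w M - aw w p * psi w (Φ p M)) := by ring
          _ = 0 := by rw [this]; ring
      · simp only [h2, if_false]
end

section
/- Let G be a finite simple graph with complex edge weights w such that w(e) ≠ 0 for every edge e, and let 𝒫 be a finite set of plaquettes such that the flip graph on the set 𝓜 of perfect matchings is connected (where M and M′ are joined iff M′ = φ_p(M) for some p ∈ 𝒫 with p₁,p₃ ∈ M or p₂,p₄ ∈ M). Then the ground state of the generalized RK Hamiltonian H = ∑_{p∈𝒫} P_p is unique: every f : 𝓜 → ℂ with H f = 0 is a complex scalar multiple of the weighted RK wavefunction ψ_w(M) = ∏_{e∈M} w(e). -/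
open scoped BigOperators

/-! Each `P_p` is positive semidefinite: pairing every matching `M` with `p₁, p₃ ∈ M` with its
flip `φ_p M`, one finds `⟨f, P_p f⟩ = ∑_M |a_p f(M) - b_p f(φ_p M)|²`. So `H f = 0` forces
`a_p f(M) = b_p f(φ_p M)` along every admissible flip. The wavefunction `ψ_w` satisfies the same
relation, hence `f / ψ_w` is invariant under flips and, the flip graph being connected,
constant. -/

open ComplexConjugate

theorem Finset.prod_mul_prod_sdiff_eq_prod_symmDiff_mul_prod_inter {ι M : Type*}
    [DecidableEq ι] [CommMonoid M] (s t : Finset ι) (f : ι → M) :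
    (∏ i ∈ s, f i) * ∏ i ∈ t \ s, f i = (∏ i ∈ symmDiff s t, f i) * ∏ i ∈ s ∩ t, f i := by
  rw [← Finset.prod_union Finset.disjoint_sdiff, Finset.union_sdiff_self_eq_union,
    ← Finset.prod_union (show Disjoint (symmDiff s t) (s ∩ t) from disjoint_symmDiff_inf s t)]
  exact congrArg (∏ i ∈ ·, f i) (symmDiff_sup_inf s t).symm

theorem Relation.exists_eq_mul_of_forall_reflTransGen {α K : Type*} [Field K]
    {r : α → α → Prop} {f g : α → K} (hg : ∀ a, g a ≠ 0)
    (hr : ∀ a b, r a b → f a * g b = f b * g a)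
    (hconn : ∀ a b, Relation.ReflTransGen r a b) : ∃ c, ∀ a, f a = c * g a := by
  rcases isEmpty_or_nonempty α with hα | ⟨⟨a₀⟩⟩
  · exact ⟨0, fun a => isEmptyElim a⟩
  refine ⟨f a₀ / g a₀, fun a => ?_⟩
  have hratio : f a₀ / g a₀ = f a / g a := by
    induction hconn a₀ a with
    | refl => rfl
    | tail _ hbc ih => rw [ih, div_eq_div_iff (hg _) (hg _), hr _ _ hbc]
  rw [hratio, div_mul_cancel₀ _ (hg a)]

theorem Complex.conj_mul_add_conj_mul_eq_normSq (a b x y : ℂ) :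
    conj x * ((‖a‖ : ℂ) ^ 2 * x - conj a * b * y) + conj y * ((‖b‖ : ℂ) ^ 2 * y - conj b * a * x)
      = (Complex.normSq (a * x - b * y) : ℂ) := by
  rw [← Complex.mul_conj, map_sub, map_mul, map_mul, ← Complex.mul_conj', ← Complex.mul_conj']
  ring

namespace RK

variable {V : Type*} {G : SimpleGraph V}

namespace Plaquette

/-- Relabelling `(v₁, v₂, v₃, v₄)` as `(v₂, v₃, v₄, v₁)` swaps the roles of the pairs
`(p₁, p₃)` and `(p₂, p₄)`, so each statement about one pair yields the other. -/
def rot (p : Plaquette G) : Plaquette G where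
  v1 := p.v2
  v2 := p.v3
  v3 := p.v4
  v4 := p.v1
  h12 := p.h23
  h13 := p.h24
  h14 := p.h12.symm
  h23 := p.h34
  h24 := p.h13.symm
  h34 := p.h14.symm
  adj12 := p.adj23
  adj23 := p.adj34
  adj34 := p.adj41
  adj41 := p.adj12

theorem rot_edges [DecidableEq V] (p : Plaquette G) : p.rot.edges = p.edges := by
  ext x
  simp only [edges, Finset.mem_insert, Finset.mem_singleton]
  exact ⟨by tauto, by tauto⟩

theorem e1_ne_e2_s5 (p : Plaquette G) : p.e1 ≠ p.e2 := by
  simp [e1, e2, p.h12, p.h13]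

theorem e1_ne_e3_s5 (p : Plaquette G) : p.e1 ≠ p.e3 := by
  simp [e1, e3, p.h13, p.h14]

theorem e2_ne_e4_s5 (p : Plaquette G) : p.e2 ≠ p.e4 :=
  p.rot.e1_ne_e3_s5

end Plaquette

theorem aw_ne_zero {w : Sym2 V → ℂ} (hw : ∀ e ∈ G.edgeSet, w e ≠ 0) (p : Plaquette G) :
    aw w p ≠ 0 :=
  mul_ne_zero (hw _ p.adj23) (hw _ p.adj41)

theorem psi_ne_zero {w : Sym2 V → ℂ} (hw : ∀ e ∈ G.edgeSet, w e ≠ 0) (M : PM G) :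
    psi w M ≠ 0 :=
  Finset.prod_ne_zero_iff.2 fun e he => hw e (M.2.1 e he)

namespace IsPM

variable {M : Finset (Sym2 V)} {p : Plaquette G}

theorem eq_of_mem_of_mem (hM : IsPM G M) {v : V} {e e' : Sym2 V} (he : e ∈ M) (he' : e' ∈ M)
    (hv : v ∈ e) (hv' : v ∈ e') : e = e' :=
  (hM.2 v).unique ⟨he, hv⟩ ⟨he', hv'⟩

theorem e2_notMem_of_e1_mem (hM : IsPM G M) (h1 : p.e1 ∈ M) : p.e2 ∉ M := fun h2 =>
  p.e1_ne_e2_s5 (hM.eq_of_mem_of_mem h1 h2 (Sym2.mem_mk_right _ _) (Sym2.mem_mk_left _ _))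

theorem inter_edges [DecidableEq V] (hM : IsPM G M) (h1 : p.e1 ∈ M) (h3 : p.e3 ∈ M) :
    M ∩ p.edges = {p.e1, p.e3} := by
  have h2 := hM.e2_notMem_of_e1_mem h1
  have h4 : p.e4 ∉ M := hM.e2_notMem_of_e1_mem (p := p.rot.rot) h3
  ext x
  simp only [Finset.mem_inter, Plaquette.edges, Finset.mem_insert, Finset.mem_singleton]
  constructor
  · rintro ⟨hx, rfl | rfl | rfl | rfl⟩ <;> simp_all
  · rintro (rfl | rfl) <;> simp_all

theorem edges_sdiff [DecidableEq V] (hM : IsPM G M) (h1 : p.e1 ∈ M) (h3 : p.e3 ∈ M) :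
    p.edges \ M = {p.e2, p.e4} := by
  have h2 := hM.e2_notMem_of_e1_mem h1
  have h4 : p.e4 ∉ M := hM.e2_notMem_of_e1_mem (p := p.rot.rot) h3
  ext x
  simp only [Finset.mem_sdiff, Plaquette.edges, Finset.mem_insert, Finset.mem_singleton]
  constructor
  · rintro ⟨rfl | rfl | rfl | rfl, hx⟩ <;> simp_all
  · rintro (rfl | rfl) <;> simp_all

end IsPM

def IsFlip [DecidableEq V] (p : Plaquette G) (φ : PM G → PM G) : Prop :=
  ∀ M : PM G, (p.e1 ∈ M.1 ∧ p.e3 ∈ M.1) ∨ (p.e2 ∈ M.1 ∧ p.e4 ∈ M.1) →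
    (φ M).1 = symmDiff M.1 p.edges

namespace IsFlip

variable [DecidableEq V] {p : Plaquette G} {φ : PM G → PM G} {M : PM G}

theorem rot (hφ : IsFlip p φ) : IsFlip p.rot φ := fun M hM => by
  rw [Plaquette.rot_edges]
  exact hφ M (hM.symm.imp_left And.symm)

theorem mem_e2_and_mem_e4 (hφ : IsFlip p φ) (h : p.e1 ∈ M.1 ∧ p.e3 ∈ M.1) :
    p.e2 ∈ (φ M).1 ∧ p.e4 ∈ (φ M).1 := by
  have hsub : p.edges \ M.1 ⊆ (φ M).1 := by
    rw [hφ M (Or.inl h)]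
    exact fun e he => Finset.mem_symmDiff.2 (Or.inr (Finset.mem_sdiff.1 he))
  rw [M.2.edges_sdiff h.1 h.2, Finset.insert_subset_iff, Finset.singleton_subset_iff] at hsub
  exact hsub

theorem mem_e1_and_mem_e3 (hφ : IsFlip p φ) (h : p.e2 ∈ M.1 ∧ p.e4 ∈ M.1) :
    p.e1 ∈ (φ M).1 ∧ p.e3 ∈ (φ M).1 :=
  (hφ.rot.mem_e2_and_mem_e4 h).symm

theorem apply_apply (hφ : IsFlip p φ) (h : (p.e1 ∈ M.1 ∧ p.e3 ∈ M.1) ∨ (p.e2 ∈ M.1 ∧ p.e4 ∈ M.1)) :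
    φ (φ M) = M := by
  have hφM : (p.e1 ∈ (φ M).1 ∧ p.e3 ∈ (φ M).1) ∨ (p.e2 ∈ (φ M).1 ∧ p.e4 ∈ (φ M).1) :=
    h.elim (fun h => .inr (hφ.mem_e2_and_mem_e4 h)) (fun h => .inl (hφ.mem_e1_and_mem_e3 h))
  exact Subtype.ext <| by rw [hφ _ hφM, hφ M h, symmDiff_symmDiff_cancel_right]

theorem aw_mul_psi (hφ : IsFlip p φ) (w : Sym2 V → ℂ) (h : p.e1 ∈ M.1 ∧ p.e3 ∈ M.1) :
    aw w p * psi w M = bw w p * psi w (φ M) := by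
  have hprod := Finset.prod_mul_prod_sdiff_eq_prod_symmDiff_mul_prod_inter M.1 p.edges w
  rw [M.2.inter_edges h.1 h.2, M.2.edges_sdiff h.1 h.2, Finset.prod_pair p.e2_ne_e4_s5,
    Finset.prod_pair p.e1_ne_e3_s5] at hprod
  rw [psi, psi, hφ M (Or.inl h), aw, bw]
  linear_combination hprod

theorem sum_conj_mul_Pp [Fintype (PM G)] {w : Sym2 V → ℂ} {Φ : Plaquette G → PM G → PM G}
    (hΦ : IsFlip p (Φ p)) (f : PM G → ℂ) :
    ∑ M, conj (f M) * Pp w Φ p f M = ∑ M with p.e1 ∈ M.1 ∧ p.e3 ∈ M.1,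
      (Complex.normSq (aw w p * f M - bw w p * f (Φ p M)) : ℂ) := by
  set A : PM G → ℂ := fun M =>
    conj (f M) * ((‖aw w p‖ : ℂ) ^ 2 * f M - conj (aw w p) * bw w p * f (Φ p M))
  set B : PM G → ℂ := fun M =>
    conj (f M) * ((‖bw w p‖ : ℂ) ^ 2 * f M - conj (bw w p) * aw w p * f (Φ p M))
  have hsplit : ∀ M, conj (f M) * Pp w Φ p f M =
      (if p.e1 ∈ M.1 ∧ p.e3 ∈ M.1 then A M else 0) +
        (if p.e2 ∈ M.1 ∧ p.e4 ∈ M.1 then B M else 0) := by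
    intro M
    by_cases h13 : p.e1 ∈ M.1 ∧ p.e3 ∈ M.1
    · have h24 : ¬(p.e2 ∈ M.1 ∧ p.e4 ∈ M.1) := fun h => M.2.e2_notMem_of_e1_mem h13.1 h.1
      simp [Pp, h13, h24, A]
    · by_cases h24 : p.e2 ∈ M.1 ∧ p.e4 ∈ M.1 <;> simp [Pp, h13, h24, B]
  have hreindex : ∑ M with p.e2 ∈ M.1 ∧ p.e4 ∈ M.1, B M =
      ∑ M with p.e1 ∈ M.1 ∧ p.e3 ∈ M.1, B (Φ p M) := by
    refine Finset.sum_nbij' (Φ p) (Φ p) ?_ ?_ ?_ ?_ ?_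
    · simpa using fun M => hΦ.mem_e1_and_mem_e3 (M := M)
    · simpa using fun M => hΦ.mem_e2_and_mem_e4 (M := M)
    · simpa using fun M h2 h4 => hΦ.apply_apply (M := M) (.inr ⟨h2, h4⟩)
    · simpa using fun M h1 h3 => hΦ.apply_apply (M := M) (.inl ⟨h1, h3⟩)
    · simpa using fun M h2 h4 => by rw [hΦ.apply_apply (M := M) (.inr ⟨h2, h4⟩)]
  rw [Finset.sum_congr rfl fun M _ => hsplit M, Finset.sum_add_distrib, ← Finset.sum_filter,
    ← Finset.sum_filter, hreindex, ← Finset.sum_add_distrib]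
  refine Finset.sum_congr rfl fun M hM => ?_
  simp only [A, B, hΦ.apply_apply (.inl (Finset.mem_filter.1 hM).2)]
  exact Complex.conj_mul_add_conj_mul_eq_normSq _ _ _ _

end IsFlip

section GroundState

variable [DecidableEq V] [Fintype (PM G)] {w : Sym2 V → ℂ} {Φ : Plaquette G → PM G → PM G}
  {Plaqs : Finset (Plaquette G)}

theorem sum_conj_mul_Ham (hΦ : ∀ p, IsFlip p (Φ p)) (f : PM G → ℂ) :
    ∑ M, conj (f M) * Ham w Φ Plaqs f M = ((∑ p ∈ Plaqs, ∑ M with p.e1 ∈ M.1 ∧ p.e3 ∈ M.1,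
      Complex.normSq (aw w p * f M - bw w p * f (Φ p M)) : ℝ) : ℂ) := by
  simp only [Ham, Finset.mul_sum, Complex.ofReal_sum]
  rw [Finset.sum_comm]
  exact Finset.sum_congr rfl fun p _ => (hΦ p).sum_conj_mul_Pp f

theorem aw_mul_eq_bw_mul_of_Ham_eq_zero (hΦ : ∀ p, IsFlip p (Φ p))
    {f : PM G → ℂ} (hf : ∀ M, Ham w Φ Plaqs f M = 0) {p : Plaquette G} (hp : p ∈ Plaqs)
    {M : PM G} (h : p.e1 ∈ M.1 ∧ p.e3 ∈ M.1) : aw w p * f M = bw w p * f (Φ p M) := by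
  have hsum : ∑ p ∈ Plaqs, ∑ M with p.e1 ∈ M.1 ∧ p.e3 ∈ M.1,
      Complex.normSq (aw w p * f M - bw w p * f (Φ p M)) = 0 := by
    have hzero : ∑ M, conj (f M) * Ham w Φ Plaqs f M = 0 := by simp [hf]
    exact_mod_cast (sum_conj_mul_Ham hΦ f).symm.trans hzero
  have hterm := (Finset.sum_eq_zero_iff_of_nonneg fun M _ => Complex.normSq_nonneg _).1
    ((Finset.sum_eq_zero_iff_of_nonneg fun p _ =>
      Finset.sum_nonneg fun M _ => Complex.normSq_nonneg _).1 hsum p hp) M (by simpa using h)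
  exact sub_eq_zero.1 (Complex.normSq_eq_zero.1 hterm)

theorem mul_psi_apply_eq_of_Ham_eq_zero (hw : ∀ e ∈ G.edgeSet, w e ≠ 0)
    (hΦ : ∀ p, IsFlip p (Φ p)) {f : PM G → ℂ} (hf : ∀ M, Ham w Φ Plaqs f M = 0)
    {p : Plaquette G} (hp : p ∈ Plaqs) {M : PM G}
    (h : (p.e1 ∈ M.1 ∧ p.e3 ∈ M.1) ∨ (p.e2 ∈ M.1 ∧ p.e4 ∈ M.1)) :
    f M * psi w (Φ p M) = f (Φ p M) * psi w M := by
  have h13 : ∀ M : PM G, p.e1 ∈ M.1 ∧ p.e3 ∈ M.1 →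
      f M * psi w (Φ p M) = f (Φ p M) * psi w M := fun M h => by
    have hf' := aw_mul_eq_bw_mul_of_Ham_eq_zero hΦ hf hp h
    have hψ := (hΦ p).aw_mul_psi w h
    apply mul_left_cancel₀ (aw_ne_zero hw p)
    linear_combination psi w (Φ p M) * hf' - f (Φ p M) * hψ
  rcases h with h | h
  · exact h13 M h
  · have := h13 (Φ p M) ((hΦ p).mem_e1_and_mem_e3 h)
    rwa [(hΦ p).apply_apply (.inr h), eq_comm] at this

end GroundState

end RK

open RK in
theorem stmt_5_general {V : Type*} [DecidableEq V] (G : SimpleGraph V)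
    [Fintype (PM G)] (w : Sym2 V → ℂ) (Plaqs : Finset (Plaquette G))
    (hw : ∀ e ∈ G.edgeSet, w e ≠ 0)
    (Φ : Plaquette G → PM G → PM G)
    (hΦ : ∀ (p : Plaquette G) (M : PM G),
      ((p.e1 ∈ M.1 ∧ p.e3 ∈ M.1) ∨ (p.e2 ∈ M.1 ∧ p.e4 ∈ M.1)) →
      (Φ p M).1 = symmDiff M.1 p.edges)
    (hconn : ∀ M M' : PM G,
      Relation.ReflTransGen
        (fun A B : PM G => ∃ p ∈ Plaqs,
          ((p.e1 ∈ A.1 ∧ p.e3 ∈ A.1) ∨ (p.e2 ∈ A.1 ∧ p.e4 ∈ A.1)) ∧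
          B.1 = symmDiff A.1 p.edges) M M') :
    ∀ f : PM G → ℂ, (∀ M : PM G, Ham w Φ Plaqs f M = 0) →
      ∃ c : ℂ, ∀ M : PM G, f M = c * psi w M := by
  intro f hf
  refine Relation.exists_eq_mul_of_forall_reflTransGen (psi_ne_zero hw) ?_ hconn
  rintro A B ⟨p, hp, hA, hB⟩
  obtain rfl : Φ p A = B := Subtype.ext ((hΦ p A hA).trans hB.symm)
  exact mul_psi_apply_eq_of_Ham_eq_zero hw hΦ hf hp hA

open RK in
/-- Uniqueness of the ground state: if all edge weights of `G` are nonzero and the flip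
graph on the set of perfect matchings (where `M, M'` are joined iff `M' = φ_p M` for some
`p ∈ Plaqs` with `p₁, p₃ ∈ M` or `p₂, p₄ ∈ M`) is connected, then every `f` with `H f = 0`
is a complex scalar multiple of the weighted RK wavefunction `ψ_w(M) = ∏_{e ∈ M} w e`. -/
theorem stmt_5 {V : Type*} [Fintype V] [DecidableEq V] (G : SimpleGraph V)
    [Fintype (PM G)] (w : Sym2 V → ℂ) (Plaqs : Finset (Plaquette G))
    (hw : ∀ e ∈ G.edgeSet, w e ≠ 0)
    (Φ : Plaquette G → PM G → PM G)
    (hΦ : ∀ (p : Plaquette G) (M : PM G),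
      ((p.e1 ∈ M.1 ∧ p.e3 ∈ M.1) ∨ (p.e2 ∈ M.1 ∧ p.e4 ∈ M.1)) →
      (Φ p M).1 = symmDiff M.1 p.edges)
    (hconn : ∀ M M' : PM G,
      Relation.ReflTransGen
        (fun A B : PM G => ∃ p ∈ Plaqs,
          ((p.e1 ∈ A.1 ∧ p.e3 ∈ A.1) ∨ (p.e2 ∈ A.1 ∧ p.e4 ∈ A.1)) ∧
          B.1 = symmDiff A.1 p.edges) M M') :
    ∀ f : PM G → ℂ, (∀ M : PM G, Ham w Φ Plaqs f M = 0) →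
      ∃ c : ℂ, ∀ M : PM G, f M = c * psi w M :=
  stmt_5_general G w Plaqs hw Φ hΦ hconn
end

section
/- Let α ∈ ℝ with α ≥ 0, and let k_x, k_y ∈ ℝ. Then P(e^{ik_x}, e^{ik_y}) = 4 sin²(k_y) + |α − e^{ik_y} − e^{−ik_x} − e^{−ik_x} e^{−ik_y}|² = 0 if and only if α = 3, e^{ik_x} = 1, and e^{ik_y} = 1. In particular, for α ≥ 0 with α ≠ 3, the band dispersion P(e^{ik_x}, e^{ik_y}) is strictly positive for all real k_x, k_y (the model has a band gap). -/
open Complex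

/-- For `α ≥ 0`, the band dispersion
`P(e^{ik_x}, e^{ik_y}) = 4 sin²(k_y) + |α − e^{ik_y} − e^{−ik_x} − e^{−ik_x}e^{−ik_y}|²`
vanishes iff `α = 3`, `e^{ik_x} = 1` and `e^{ik_y} = 1`. In particular, for `α ≥ 0` with
`α ≠ 3` it is strictly positive for all real `k_x, k_y` (the model has a band gap). -/
theorem stmt_7 (α : ℝ) (hα : 0 ≤ α) (kx ky : ℝ) :
    (4 * Real.sin ky ^ 2
        + ‖(α : ℂ) - exp (I * ky) - exp (-I * kx)
            - exp (-I * kx) * exp (-I * ky)‖ ^ 2 = 0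
      ↔ α = 3 ∧ exp (I * kx) = 1 ∧ exp (I * ky) = 1) ∧
    (α ≠ 3 → 0 < 4 * Real.sin ky ^ 2
        + ‖(α : ℂ) - exp (I * ky) - exp (-I * kx)
            - exp (-I * kx) * exp (-I * ky)‖ ^ 2) := by
  set E : ℂ := (α : ℂ) - exp (I * ky) - exp (-I * kx) - exp (-I * kx) * exp (-I * ky) with hE
  have habs : (0:ℝ) ≤ ‖E‖ := norm_nonneg E
  have key : 4 * Real.sin ky ^ 2 + ‖E‖ ^ 2 = 0
      ↔ α = 3 ∧ exp (I * kx) = 1 ∧ exp (I * ky) = 1 := by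
    constructor
    · intro h
      have hs : Real.sin ky = 0 := by nlinarith [sq_nonneg (Real.sin ky), sq_nonneg (‖E‖)]
      have ha : ‖E‖ = 0 := by nlinarith [sq_nonneg (Real.sin ky), sq_nonneg (‖E‖)]
      have hE0 : E = 0 := by simpa using ha
      have hzy : exp (I * ky) = ((Real.cos ky : ℂ)) := by
        rw [mul_comm, Complex.exp_mul_I, ← Complex.ofReal_sin, ← Complex.ofReal_cos, hs]
        simp
      have hzy' : exp (-I * ky) = ((Real.cos ky : ℂ)) := by
        rw [show -I * (ky:ℂ) = ((-ky : ℝ) : ℂ) * I by push_cast; ring, Complex.exp_mul_I,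
          ← Complex.ofReal_sin, ← Complex.ofReal_cos]
        simp [hs]
      have hcos : Real.cos ky = 1 ∨ Real.cos ky = -1 := by
        have hpy := Real.sin_sq_add_cos_sq ky
        have h2 : (Real.cos ky - 1) * (Real.cos ky + 1) = 0 := by nlinarith
        rcases mul_eq_zero.mp h2 with h3 | h3
        · left; linarith
        · right; linarith
      rcases hcos with hc | hc
      · -- exp(I ky) = 1
        have hzy1 : exp (I * ky) = 1 := by rw [hzy, hc]; norm_num
        have hw : exp (-I * kx) = ((α - 1)/2 : ℝ) := by
          have : (α : ℂ) - 1 - 2 * exp (-I * kx) = 0 := by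
            rw [hE, hzy1, hzy', hc] at hE0; push_cast at hE0; linear_combination hE0
          push_cast
          linear_combination (-1/2 : ℂ) * this
        have hwabs : ‖exp (-I * kx)‖ = 1 := by
          rw [show -I * (kx:ℂ) = (-kx : ℝ) * I by push_cast; ring, Complex.norm_exp_ofReal_mul_I]
        rw [hw, Complex.norm_real, Real.norm_eq_abs] at hwabs
        have hα3 : α = 3 := by
          rcases abs_eq (by norm_num : (0:ℝ) ≤ 1) |>.mp hwabs with h1 | h1 <;> nlinarith
        have hw1 : exp (-I * kx) = 1 := by rw [hw, hα3]; norm_num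
        have hx1 : exp (I * kx) = 1 := by
          have := Complex.exp_add (I * kx) (-I * kx)
          rw [hw1, mul_one] at this
          rw [← this]; norm_num
        exact ⟨hα3, hx1, hzy1⟩
      · exfalso
        have hzy1 : exp (I * ky) = -1 := by rw [hzy, hc]; norm_num
        have : (α : ℂ) + 1 = 0 := by
          rw [hE, hzy1, hzy', hc] at hE0; push_cast at hE0; linear_combination hE0
        have : α = -1 := by exact_mod_cast (by linear_combination this : (α:ℂ) = -1)
        linarith
    · rintro ⟨hα3, hx, hy⟩
      have hsin : Real.sin ky = 0 := by
        have h := Complex.exp_ofReal_mul_I_im ky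
        rw [show ((ky:ℂ) * I) = I * ky by ring, hy] at h
        simpa using h.symm
      have hwx : exp (-I * kx) = 1 := by
        have := Complex.exp_add (I * kx) (-I * kx)
        rw [hx] at this
        have h0 : exp (I * kx + -I * kx) = 1 := by norm_num
        rw [h0, one_mul] at this
        exact this.symm
      have hwy : exp (-I * ky) = 1 := by
        have h2 := Complex.exp_add (I * ky) (-I * ky)
        rw [hy] at h2
        have h0 : exp (I * ky + -I * ky) = 1 := by norm_num
        rw [h0, one_mul] at h2
        exact h2.symm
      have hE0 : E = 0 := by rw [hE, hy, hwx, hwy, hα3]; norm_num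
      rw [hE0, hsin]
      simp
  refine ⟨key, fun hne => ?_⟩
  rcases lt_or_eq_of_le (by positivity : (0:ℝ) ≤ 4 * Real.sin ky ^ 2 + ‖E‖ ^ 2) with h | h
  · exact h
  · exact absurd (key.mp h.symm).1 hne
end

section
/- Let α ∈ ℝ with α ≥ 0 and α ≠ 3, and let z ∈ ℂ with |z| = 1 and c₁(z,α) ≠ 0. Then there exist r₊, r₋ ∈ ℂ with |r₊| < 1 < |r₋| such that c₁(z,α)·w² + c₂(z,α)·w + c₃(z,α) = c₁(z,α)·(w − r₊)·(w − r₋) for all w ∈ ℂ. That is, off the critical point α = 3 the quadratic factor of the characteristic polynomial has exactly one root strictly inside and one root strictly outside the unit circle, and no roots on the unit circle. -/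
open Complex

lemma key_lemma (α : ℝ) (hα : 0 ≤ α) (hα3 : α ≠ 3) (z : ℂ) (hz : ‖z‖ = 1)
    (hz1 : z + 1 ≠ 0) (w : ℂ) (hw : ‖w‖ = 1) :
    (z - (α : ℂ)) * (z + 1) * w ^ 2
      + (5 + (α : ℂ) ^ 2 - (z ^ 2 + z⁻¹ ^ 2) + (1 - (α : ℂ)) * (z + z⁻¹)) * w
      + (z⁻¹ - (α : ℂ)) * (z⁻¹ + 1) ≠ 0 := by
  have hz0 : z ≠ 0 := by intro h; simp [h] at hz
  have hw0 : w ≠ 0 := by intro h; simp [h] at hw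
  have hu : z * z⁻¹ = 1 := mul_inv_cancel₀ hz0
  have hv : w * w⁻¹ = 1 := mul_inv_cancel₀ hw0
  intro h
  have hI : (z - (α : ℂ)) * (z + 1) * w ^ 2
      + (5 + (α : ℂ) ^ 2 - (z ^ 2 + z⁻¹ ^ 2) + (1 - (α : ℂ)) * (z + z⁻¹)) * w
      + (z⁻¹ - (α : ℂ)) * (z⁻¹ + 1)
      = w * (-(z - z⁻¹) ^ 2 + ((α : ℂ) - z - w⁻¹ - z⁻¹ * w⁻¹) * ((α : ℂ) - z⁻¹ - w - z * w)) := by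
    linear_combination (-3*w - w^2*w⁻¹) * hu
      + ((α:ℂ) - 2*w - z⁻¹ + z⁻¹*(α:ℂ) - z⁻¹*w - z⁻¹^2 - z*w) * hv
  have hzc : (starRingEnd ℂ) z = z⁻¹ := (Complex.inv_eq_conj hz).symm
  have hwc : (starRingEnd ℂ) w = w⁻¹ := (Complex.inv_eq_conj hw).symm
  have hconj : (starRingEnd ℂ) ((α : ℂ) - z - w⁻¹ - z⁻¹ * w⁻¹)
      = (α : ℂ) - z⁻¹ - w - z * w := by
    simp only [map_sub, map_mul, map_inv₀, Complex.conj_ofReal, hzc, hwc, inv_inv]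
  have hsum : ((4 * z.im ^ 2 + Complex.normSq ((α : ℂ) - z - w⁻¹ - z⁻¹ * w⁻¹) : ℝ) : ℂ)
      = -(z - z⁻¹) ^ 2 + ((α : ℂ) - z - w⁻¹ - z⁻¹ * w⁻¹) * ((α : ℂ) - z⁻¹ - w - z * w) := by
    rw [← hconj, Complex.mul_conj, ← hzc, Complex.sub_conj]
    push_cast
    linear_combination (4 * (z.im : ℂ) ^ 2) * Complex.I_sq
  have h' : -(z - z⁻¹) ^ 2 + ((α : ℂ) - z - w⁻¹ - z⁻¹ * w⁻¹) * ((α : ℂ) - z⁻¹ - w - z * w) = 0 := by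
    rcases mul_eq_zero.mp (hI.symm.trans h) with h' | h'
    · exact absurd h' hw0
    · exact h'
  have h0 : (4 * z.im ^ 2 + Complex.normSq ((α : ℂ) - z - w⁻¹ - z⁻¹ * w⁻¹) : ℝ) = 0 := by
    exact_mod_cast hsum.trans h'
  have hns := Complex.normSq_nonneg ((α : ℂ) - z - w⁻¹ - z⁻¹ * w⁻¹)
  have him : z.im = 0 := by nlinarith
  have hA0 : (α : ℂ) - z - w⁻¹ - z⁻¹ * w⁻¹ = 0 := by
    apply Complex.normSq_eq_zero.mp; nlinarith
  have hnsz : Complex.normSq z = 1 := by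
    rw [← Complex.sq_norm, hz]; norm_num
  have hre : z.re = 1 ∨ z.re = -1 := by
    have h2 : (z.re - 1) * (z.re + 1) = 0 := by
      have := Complex.normSq_apply z
      nlinarith
    rcases mul_eq_zero.mp h2 with h1 | h1
    · left; linarith
    · right; linarith
  have hz1' : z = 1 := by
    rcases hre with h1 | h1
    · exact Complex.ext (by simp [h1]) (by simp [him])
    · exfalso; apply hz1
      have : z = -1 := Complex.ext (by simp [h1]) (by simp [him])
      rw [this]; ring
  rw [hz1'] at hA0
  simp only [inv_one, one_mul] at hA0
  have hwinv : w⁻¹ = (((α - 1) / 2 : ℝ) : ℂ) := by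
    push_cast
    linear_combination (-1/2 : ℂ) * hA0
  have habs : |(α - 1) / 2| = 1 := by
    have h1 : ‖w⁻¹‖ = 1 := by rw [norm_inv, hw]; norm_num
    rw [hwinv, Complex.norm_real, Real.norm_eq_abs] at h1
    exact h1
  rcases (abs_eq (by norm_num : (0:ℝ) ≤ 1)).mp habs with h1 | h1
  · exact hα3 (by linarith)
  · linarith

/-- Off the critical point `α = 3` and on the unit circle `|z| = 1` (with
`c₁(z,α) ≠ 0`), the quadratic factor `c₁(z,α)w² + c₂(z,α)w + c₃(z,α)` of the
characteristic polynomial has exactly one root `r₊` strictly inside and one root `r₋`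
strictly outside the unit circle, and no roots on the unit circle. -/

theorem stmt_11 (α : ℝ) (hα : 0 ≤ α) (hα3 : α ≠ 3) (z : ℂ) (hz : ‖z‖ = 1)
    (hc1 : (z - (α : ℂ)) * (z + 1) ≠ 0) :
    ∃ rp rm : ℂ, ‖rp‖ < 1 ∧ 1 < ‖rm‖ ∧
      ∀ w : ℂ,
        (z - (α : ℂ)) * (z + 1) * w ^ 2
          + (5 + (α : ℂ) ^ 2 - (z ^ 2 + z⁻¹ ^ 2) + (1 - (α : ℂ)) * (z + z⁻¹)) * w
          + (z⁻¹ - (α : ℂ)) * (z⁻¹ + 1)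
        = (z - (α : ℂ)) * (z + 1) * (w - rp) * (w - rm) := by
  have hz1 : z + 1 ≠ 0 := fun h => hc1 (by rw [h, mul_zero])
  set c1 : ℂ := (z - (α : ℂ)) * (z + 1) with hc1def
  set c2 : ℂ := 5 + (α : ℂ) ^ 2 - (z ^ 2 + z⁻¹ ^ 2) + (1 - (α : ℂ)) * (z + z⁻¹) with hc2def
  set c3 : ℂ := (z⁻¹ - (α : ℂ)) * (z⁻¹ + 1) with hc3def
  obtain ⟨s, hs⟩ := Complex.isAlgClosed.exists_pow_nat_eq (c2 ^ 2 - 4 * c1 * c3) (n := 2)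
    (by norm_num)
  set rp0 : ℂ := (-c2 + s) / (2 * c1) with hrp0
  set rm0 : ℂ := (-c2 - s) / (2 * c1) with hrm0
  have h2c1 : (2 : ℂ) * c1 ≠ 0 := mul_ne_zero two_ne_zero hc1
  have e1 : rp0 * (2 * c1) = -c2 + s := div_mul_cancel₀ _ h2c1
  have e2 : rm0 * (2 * c1) = -c2 - s := div_mul_cancel₀ _ h2c1
  have h1 : c1 * (rp0 + rm0) = -c2 := by
    linear_combination (1/2 : ℂ) * e1 + (1/2 : ℂ) * e2
  have h2 : c1 * (rp0 * rm0) = c3 := by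
    have key2 : (4 * c1) * (c1 * (rp0 * rm0) - c3) = 0 := by
      linear_combination (rm0 * (2 * c1)) * e1 + (-c2 + s) * e2 - hs
    rcases mul_eq_zero.mp key2 with h | h
    · exact absurd h (by simpa using hc1)
    · linear_combination h
  have hfac : ∀ w : ℂ, c1 * w ^ 2 + c2 * w + c3 = c1 * (w - rp0) * (w - rm0) := by
    intro w
    linear_combination w * h1 - h2
  -- no roots on the unit circle
  have hnc : ∀ r : ℂ, ‖r‖ = 1 → r ≠ rp0 ∧ r ≠ rm0 := by
    intro r hr
    have hk := key_lemma α hα hα3 z hz hz1 r hr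
    rw [hfac r] at hk
    constructor
    · intro h; apply hk; rw [h]; ring
    · intro h; apply hk; rw [h]; ring
  have habs_rp : ‖rp0‖ ≠ 1 := by
    intro h
    exact ((hnc rp0 h).1) rfl
  have habs_rm : ‖rm0‖ ≠ 1 := by
    intro h
    exact ((hnc rm0 h).2) rfl
  -- product of absolute values is 1
  have hzc : (starRingEnd ℂ) z = z⁻¹ := (Complex.inv_eq_conj hz).symm
  have hc3c : c3 = (starRingEnd ℂ) c1 := by
    rw [hc3def, hc1def, map_mul, map_sub, map_add, hzc, Complex.conj_ofReal, map_one]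
  have habsc3 : ‖c3‖ = ‖c1‖ := by rw [hc3c, Complex.norm_conj]
  have hprod : ‖rp0‖ * ‖rm0‖ = 1 := by
    have : rp0 * rm0 = c3 / c1 := by
      rw [eq_div_iff hc1]
      linear_combination h2
    rw [← norm_mul, this, norm_div, habsc3, div_self (norm_ne_zero_iff.mpr hc1)]
  rcases lt_or_gt_of_ne habs_rp with hlt | hgt
  · refine ⟨rp0, rm0, hlt, ?_, fun w => hfac w⟩
    nlinarith [norm_nonneg rp0]
  · refine ⟨rm0, rp0, ?_, hgt, fun w => by rw [hfac w]; ring⟩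
    nlinarith [norm_nonneg rm0]
end

section
/- Let κ > 0, let κ′ > κ, and let f : ℂ → ℂ be 2π-periodic (f(ζ + 2π) = f(ζ) for all ζ ∈ ℂ) and complex-differentiable on the open strip {ζ ∈ ℂ : |Im ζ| < κ′}. Then there exists a constant C ≥ 0 such that for every n ∈ ℤ, the n-th Fourier coefficient satisfies |(1/(2π)) ∫₀^{2π} f(t)·e^{−int} dt| ≤ C·e^{−κ|n|}. (Paley–Wiener theorem for periodic analytic functions, forward direction.) -/
open Complex

/-- Paley–Wiener theorem for periodic analytic functions (forward direction): if
`f : ℂ → ℂ` is `2π`-periodic and holomorphic on the open strip `{|Im ζ| < κ′}` with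
`κ′ > κ > 0`, then its Fourier coefficients decay like `e^{−κ|n|}`. -/
theorem stmt_13 (κ κ' : ℝ) (hκ : 0 < κ) (hκ' : κ < κ') (f : ℂ → ℂ)
    (hper : ∀ ζ : ℂ, f (ζ + 2 * Real.pi) = f ζ)
    (hf : DifferentiableOn ℂ f {ζ : ℂ | |ζ.im| < κ'}) :
    ∃ C : ℝ, 0 ≤ C ∧ ∀ n : ℤ,
      ‖((1 / (2 * Real.pi) : ℂ) *
          ∫ t in (0 : ℝ)..(2 * Real.pi), f t * exp (-(n : ℂ) * I * t))‖
        ≤ C * Real.exp (-κ * |(n : ℝ)|) := by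
  have hπ : (0:ℝ) < 2 * Real.pi := by positivity
  -- compact strip
  set K : Set ℂ := Set.Icc (0:ℝ) (2*Real.pi) ×ℂ Set.Icc (-κ) κ with hK
  have hKsub : K ⊆ {ζ : ℂ | |ζ.im| < κ'} := by
    rintro ζ ⟨-, h2⟩
    simp only [Set.mem_setOf_eq]
    exact lt_of_le_of_lt (abs_le.2 ⟨h2.1, h2.2⟩) (lt_of_le_of_lt le_rfl hκ')
  have hKc : IsCompact K :=
    Metric.isCompact_of_isClosed_isBounded
      (isClosed_Icc.reProdIm isClosed_Icc)
      ((Metric.isBounded_Icc (0:ℝ) (2*Real.pi)).reProdIm (Metric.isBounded_Icc (-κ) κ))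
  obtain ⟨M, hM⟩ := hKc.exists_bound_of_continuousOn (hf.continuousOn.mono hKsub)
  have hM0 : 0 ≤ M := le_trans (norm_nonneg _) (hM 0 (by
    rw [hK, Complex.mem_reProdIm]
    exact ⟨by simp [Set.mem_Icc, hπ.le], by simp [Set.mem_Icc, hκ.le]⟩))
  refine ⟨M, hM0, fun n => ?_⟩
  -- contour shift lemma
  have shift : ∀ y : ℝ, |y| ≤ κ →
      (∫ t in (0:ℝ)..(2*Real.pi), f t * exp (-(n : ℂ) * I * t)) =
      ∫ t in (0:ℝ)..(2*Real.pi), f (t + y*I) * exp (-(n : ℂ) * I * (t + y*I)) := by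
    intro y hy
    set g : ℂ → ℂ := fun ζ => f ζ * exp (-(n : ℂ) * I * ζ) with hg
    have hgd : DifferentiableOn ℂ g {ζ : ℂ | |ζ.im| < κ'} :=
      hf.mul ((Differentiable.cexp (differentiable_id.const_mul _)).differentiableOn)
    have key := Complex.integral_boundary_rect_eq_zero_of_differentiableOn g 0
      (2*Real.pi + y*I) (by
        refine hgd.mono ?_
        rintro ζ ⟨h1, h2⟩
        simp only [Complex.zero_re, Complex.zero_im, Complex.add_re, Complex.add_im,
          Complex.ofReal_re, Complex.ofReal_im, Complex.mul_re, Complex.mul_im,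
          Complex.I_re, Complex.I_im] at h1 h2
        have h2' : ζ.im ∈ Set.uIcc 0 y := by
          convert h2 using 2 <;> simp
        have : |ζ.im| ≤ |y| := by
          rw [Set.mem_uIcc] at h2'
          rcases h2' with h | h <;> rw [abs_le] <;>
            constructor <;> nlinarith [le_abs_self y, neg_abs_le y]
        exact lt_of_le_of_lt (this.trans hy) hκ')
    have hre : (2*Real.pi + y*I : ℂ).re = 2*Real.pi := by simp
    have him : (2*Real.pi + y*I : ℂ).im = y := by simp
    rw [hre, him] at key
    simp only [Complex.zero_re, Complex.zero_im, Complex.ofReal_zero, zero_mul, add_zero,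
      smul_eq_mul] at key
    have hvert : (∫ t in (0:ℝ)..y, g ((2*Real.pi : ℝ) + t * I)) =
        ∫ t in (0:ℝ)..y, g (0 + t * I) := by
      refine intervalIntegral.integral_congr fun t _ => ?_
      have h1 : f (((2*Real.pi:ℝ):ℂ) + (t:ℂ) * I) = f ((0:ℂ) + (t:ℂ) * I) := by
        rw [show ((2*Real.pi:ℝ):ℂ) + (t:ℂ) * I = ((0:ℂ) + (t:ℂ) * I) + 2 * Real.pi by
          push_cast; ring]
        exact hper _
      simp only [hg]
      rw [h1]
      congr 1
      rw [show -(n : ℂ) * I * (((2*Real.pi:ℝ):ℂ) + (t:ℂ) * I) =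
        (-n : ℤ) * (2 * Real.pi * I) + -(n:ℂ) * I * ((0:ℂ) + (t:ℂ) * I) by push_cast; ring,
        Complex.exp_add, Complex.exp_int_mul_two_pi_mul_I, one_mul]
    rw [hvert] at key
    have : (∫ x in (0:ℝ)..(2*Real.pi), g x) = ∫ x in (0:ℝ)..(2*Real.pi), g (x + y * I) := by
      linear_combination key
    simpa [hg] using this
  -- choose the shift
  set y : ℝ := if 0 ≤ n then -κ else κ with hy
  have hyabs : |y| ≤ κ := by
    rw [hy]; split_ifs <;>
      simp [abs_neg, _root_.abs_of_nonneg hκ.le]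
  have hny : (n : ℝ) * y = -κ * |(n:ℝ)| := by
    rw [hy]; split_ifs with h
    · rw [_root_.abs_of_nonneg (by exact_mod_cast h : (0:ℝ) ≤ (n:ℝ))]; ring
    · rw [_root_.abs_of_neg (by push_neg at h; exact_mod_cast h : (n:ℝ) < 0)]; ring
  rw [shift y hyabs]
  have hbound : ∀ t ∈ Set.uIoc (0:ℝ) (2*Real.pi),
      ‖f (t + y*I) * exp (-(n : ℂ) * I * (t + y*I))‖ ≤ M * Real.exp ((n:ℝ) * y) := by
    intro t ht
    rw [Set.uIoc_of_le hπ.le] at ht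
    have hmem : ((t:ℂ) + y*I) ∈ K := by
      rw [hK, Complex.mem_reProdIm]
      have hre' : ((t:ℂ) + y*I).re = t := by simp
      have him' : ((t:ℂ) + y*I).im = y := by simp
      rw [hre', him']
      exact ⟨⟨ht.1.le, ht.2⟩, Set.mem_Icc.2 (abs_le.1 hyabs)⟩
    have h1 : ‖f ((t:ℂ) + y*I)‖ ≤ M := hM _ hmem
    have h2 : ‖exp (-(n : ℂ) * I * ((t:ℂ) + y*I))‖ = Real.exp ((n:ℝ) * y) := by
      rw [Complex.norm_exp]
      congr 1
      simp [Complex.mul_re, Complex.mul_im]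
    rw [norm_mul, h2]
    exact mul_le_mul_of_nonneg_right h1 (Real.exp_nonneg _)
  have := intervalIntegral.norm_integral_le_of_norm_le_const hbound
  rw [norm_mul]
  have habs1 : ‖((1 / (2 * Real.pi) : ℂ))‖ = 1 / (2*Real.pi) := by
    rw [norm_div]; simp [_root_.abs_of_pos hπ, Real.pi_pos.le]
  rw [habs1]
  calc 1 / (2*Real.pi) * norm (∫ t in (0:ℝ)..(2*Real.pi),
        f (t + y*I) * exp (-(n : ℂ) * I * (t + y*I)))
      ≤ 1 / (2*Real.pi) * (M * Real.exp (-κ * |(n:ℝ)|) * |2*Real.pi - 0|) := by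
        apply mul_le_mul_of_nonneg_left _ (by positivity)
        rw [← hny]
        exact this
    _ = M * Real.exp (-κ * |(n:ℝ)|) := by
        rw [_root_.abs_of_pos (by linarith : (0:ℝ) < 2*Real.pi - 0)]
        field_simp
        ring
end

section
/- Let κ > 0 and let f : ℝ → ℂ be continuous and 2π-periodic with Fourier coefficients f̂(n) = (1/(2π)) ∫₀^{2π} f(t)·e^{−int} dt satisfying |f̂(n)| ≤ C·e^{−κ|n|} for all n ∈ ℤ and some constant C ≥ 0. Then f extends analytically to the open strip: there exists F : ℂ → ℂ that is complex-differentiable on {ζ ∈ ℂ : |Im ζ| < κ} with F(t) = f(t) for all t ∈ ℝ. (Paley–Wiener theorem for periodic analytic functions, converse direction.) -/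
open Complex

lemma aux_summable_exp {a : ℝ} (ha : 0 < a) :
    Summable (fun n : ℤ => Real.exp (-a * |(n : ℝ)|)) := by
  have h : ∀ n : ℤ, Real.exp (-a * |(n : ℝ)|) = (Real.exp (-a)) ^ n.natAbs := by
    intro n
    rw [← Real.exp_nat_mul]
    congr 1
    rw [Nat.cast_natAbs]
    push_cast
    ring
  simp_rw [h]
  have hlt : Real.exp (-a) < 1 := Real.exp_lt_one_iff.mpr (by linarith)
  have hgeo : Summable (fun k : ℕ => Real.exp (-a) ^ k) :=
    summable_geometric_of_lt_one (Real.exp_pos _).le hlt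
  apply Summable.of_nat_of_neg <;> simpa using hgeo


/-- Paley–Wiener theorem for periodic analytic functions (converse direction): if
`f : ℝ → ℂ` is continuous, `2π`-periodic, and its Fourier coefficients satisfy
`|f̂(n)| ≤ C e^{−κ|n|}`, then `f` extends to a function holomorphic on the open strip
`{|Im ζ| < κ}`. -/
theorem stmt_14 (κ : ℝ) (hκ : 0 < κ) (C : ℝ) (hC : 0 ≤ C) (f : ℝ → ℂ)
    (hcont : Continuous f)
    (hper : ∀ t : ℝ, f (t + 2 * Real.pi) = f t)
    (hdecay : ∀ n : ℤ,
      ‖(1 / (2 * Real.pi) : ℂ) *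
          ∫ t in (0 : ℝ)..(2 * Real.pi), f t * exp (-(n : ℂ) * I * t)‖
        ≤ C * Real.exp (-κ * |(n : ℝ)|)) :
    ∃ F : ℂ → ℂ, DifferentiableOn ℂ F {ζ : ℂ | |ζ.im| < κ} ∧ ∀ t : ℝ, F t = f t := by
  have hπ : (0 : ℝ) < 2 * Real.pi := by positivity
  haveI : Fact (0 < 2 * Real.pi) := ⟨hπ⟩
  have hp : Function.Periodic f (2 * Real.pi) := hper
  set g : C(AddCircle (2 * Real.pi), ℂ) :=
    ⟨hp.lift, continuous_coinduced_dom.mpr hcont⟩ with hg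
  set c : ℤ → ℂ := fun n => (1 / (2 * Real.pi) : ℂ) *
      ∫ t in (0 : ℝ)..(2 * Real.pi), f t * exp (-(n : ℂ) * I * t) with hcdef
  have hcoeff : ∀ n : ℤ, fourierCoeff (g : AddCircle (2 * Real.pi) → ℂ) n = c n := by
    intro n
    rw [fourierCoeff_eq_intervalIntegral _ n 0, zero_add]
    have hint : ∀ x : ℝ,
        (fourier (-n) (x : AddCircle (2 * Real.pi)) : ℂ) • g (x : AddCircle (2 * Real.pi))
          = f x * exp (-(n : ℂ) * I * x) := by
      intro x
      rw [smul_eq_mul, fourier_coe_apply, mul_comm]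
      congr 1
      · congr 1
        push_cast
        rw [div_eq_iff (by simp [Real.pi_ne_zero] : (2 * (Real.pi : ℂ)) ≠ 0)]
        ring
    rw [intervalIntegral.integral_congr (fun x _ => hint x)]
    rw [hcdef]
    rw [Complex.real_smul]
    push_cast
    ring_nf
  have hsum : Summable (fourierCoeff (g : AddCircle (2 * Real.pi) → ℂ)) := by
    apply Summable.of_norm_bounded ((aux_summable_exp hκ).mul_left C)
    intro n
    rw [hcoeff n]
    exact hdecay n
  refine ⟨fun ζ => ∑' n : ℤ, c n * Complex.exp ((n : ℂ) * I * ζ), ?_, ?_⟩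
  · intro z hz
    simp only [Set.mem_setOf_eq] at hz
    apply DifferentiableAt.differentiableWithinAt
    set r := (|z.im| + κ) / 2 with hrdef
    have hr1 : |z.im| < r := by rw [hrdef]; linarith
    have hr2 : r < κ := by rw [hrdef]; linarith
    have hopen : IsOpen {ζ : ℂ | |ζ.im| < r} :=
      isOpen_lt (continuous_abs.comp Complex.continuous_im) continuous_const
    have hbound : ∀ (n : ℤ) (w : ℂ), w ∈ {ζ : ℂ | |ζ.im| < r} →
        ‖c n * Complex.exp ((n : ℂ) * I * w)‖ ≤ C * Real.exp (-(κ - r) * |(n : ℝ)|) := by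
      intro n w hw
      simp only [Set.mem_setOf_eq] at hw
      rw [norm_mul, Complex.norm_exp]
      have h1 : (((n : ℂ) * I * w).re) = -(n : ℝ) * w.im := by
        simp [Complex.mul_re, Complex.mul_im]
      rw [h1]
      have h2 : -(n : ℝ) * w.im ≤ |(n : ℝ)| * r := by
        calc -(n : ℝ) * w.im ≤ |(-(n : ℝ)) * w.im| := le_abs_self _
          _ = |(n : ℝ)| * |w.im| := by rw [abs_mul, abs_neg]
          _ ≤ |(n : ℝ)| * r := by
              exact mul_le_mul_of_nonneg_left hw.le (abs_nonneg _)
      calc ‖c n‖ * Real.exp (-(n : ℝ) * w.im)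
          ≤ (C * Real.exp (-κ * |(n : ℝ)|)) * Real.exp (|(n : ℝ)| * r) := by
            apply mul_le_mul (hdecay n) (Real.exp_le_exp.mpr h2) (Real.exp_pos _).le
            positivity
        _ = C * Real.exp (-(κ - r) * |(n : ℝ)|) := by
            rw [mul_assoc, ← Real.exp_add]
            congr 2
            ring
    have hdiff := differentiableOn_tsum_of_summable_norm
      ((aux_summable_exp (show (0:ℝ) < κ - r by linarith)).mul_left C)
      (fun n : ℤ => ((differentiable_const (c n)).mul
        (Complex.differentiable_exp.comp (differentiable_id.const_mul ((n : ℂ) * I)))).differentiableOn)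
      hopen hbound
    exact (hdiff z hr1).differentiableAt (hopen.mem_nhds hr1)
  · intro t
    have hsum2 := has_pointwise_sum_fourier_series_of_summable hsum
      (t : AddCircle (2 * Real.pi))
    have hterm : (fun i : ℤ => fourierCoeff (g : AddCircle (2 * Real.pi) → ℂ) i •
        fourier i (t : AddCircle (2 * Real.pi))) =
        fun i : ℤ => c i * Complex.exp ((i : ℂ) * I * (t : ℂ)) := by
      funext i
      rw [hcoeff, smul_eq_mul, fourier_coe_apply]
      congr 1
      congr 1
      push_cast
      rw [div_eq_iff (by simp [Real.pi_ne_zero] : (2 * (Real.pi : ℂ)) ≠ 0)]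
      ring
    rw [hterm] at hsum2
    have hgt : g (t : AddCircle (2 * Real.pi)) = f t := rfl
    rw [← hgt]
    exact hsum2.tsum_eq
end

section
/- Let α ∈ ℝ with α ≥ 0 and α ≠ 3. Then there exist constants C ≥ 0 and c > 0 such that for all (m, n) ∈ ℤ × ℤ, the Fourier coefficients of the reciprocal of the band dispersion satisfy |(1/(4π²)) ∫₀^{2π} ∫₀^{2π} e^{−i(m k_x + n k_y)} / P(e^{ik_x}, e^{ik_y}) dk_x dk_y| ≤ C·e^{−c(|m| + |n|)}. (This is the exponential decay of the entries of the inverse Kasteleyn matrix, i.e., of the real-space Green's function, in the infinite-size periodic limit off the critical point; it implies exponential decay of all dimer-dimer correlators for α ≠ 3.) -/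
open Complex



noncomputable def FF (α : ℝ) (u v : ℂ) : ℂ :=
  -(exp (I*v) - exp (-I*v))^2 +
    ((α : ℂ) - exp (I*v) - exp (-I*u) - exp (-I*u) * exp (-I*v)) *
    ((α : ℂ) - exp (-I*v) - exp (I*u) - exp (I*u) * exp (I*v))

lemma cast_FF (α x y : ℝ) :
    ((4 * Real.sin y ^ 2 + ‖((α : ℂ) - exp (I * y) - exp (-I * x)
        - exp (-I * x) * exp (-I * y))‖ ^ 2 : ℝ) : ℂ) = FF α x y := by
  set w : ℂ := (α : ℂ) - exp (I * y) - exp (-I * x) - exp (-I * x) * exp (-I * y) with hw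
  have hconj : (starRingEnd ℂ) w = (α : ℂ) - exp (-I*y) - exp (I*x) - exp (I*x) * exp (I*y) := by
    simp only [hw, map_sub, map_mul, ← Complex.exp_conj, Complex.conj_ofReal, map_neg,
      Complex.conj_I, neg_mul, neg_neg, map_mul]
  have habs : ((‖w‖ ^ 2 : ℝ) : ℂ) = w * (starRingEnd ℂ) w := by
    rw [Complex.sq_norm, Complex.mul_conj]
  have hsin : ((4 * Real.sin y ^ 2 : ℝ) : ℂ) = -(exp (I*(y:ℂ)) - exp (-I*(y:ℂ)))^2 := by
    have h1 : exp (I*(y:ℂ)) = Complex.cos y + Complex.sin y * I := by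
      rw [mul_comm, Complex.exp_mul_I]
    have h2 : exp (-I*(y:ℂ)) = Complex.cos y - Complex.sin y * I := by
      have : -I*(y:ℂ) = (-(y:ℂ)) * I := by ring
      rw [this, Complex.exp_mul_I, Complex.cos_neg, Complex.sin_neg]; ring
    rw [h1, h2]
    push_cast [Complex.ofReal_sin]
    ring_nf
    rw [Complex.I_sq]
    ring
  rw [Complex.ofReal_add, habs, hsin, hconj, FF]

lemma P_pos (α : ℝ) (hα : 0 ≤ α) (hα3 : α ≠ 3) (x y : ℝ) :
    0 < 4 * Real.sin y ^ 2 + ‖((α : ℂ) - exp (I * y) - exp (-I * x)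
        - exp (-I * x) * exp (-I * y))‖ ^ 2 := by
  set w : ℂ := (α : ℂ) - exp (I * y) - exp (-I * x) - exp (-I * x) * exp (-I * y) with hw
  rcases (lt_or_eq_of_le (by positivity : (0:ℝ) ≤ 4 * Real.sin y ^ 2 + ‖w‖ ^ 2)) with h | h
  · exact h
  exfalso
  have hs : Real.sin y = 0 := by nlinarith [sq_nonneg (Real.sin y), sq_nonneg ‖w‖, norm_nonneg w]
  have hw0 : w = 0 := by
    have : ‖w‖ = 0 := by nlinarith [sq_nonneg (Real.sin y), norm_nonneg w]
    simpa using this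
  have hcos : Real.cos y = 1 ∨ Real.cos y = -1 := by
    have h1 : Real.cos y * Real.cos y = 1 := by nlinarith [Real.sin_sq_add_cos_sq y]
    exact mul_self_eq_one_iff.mp h1
  have hey : exp (I * (y:ℂ)) = ((Real.cos y : ℝ) : ℂ) := by
    rw [mul_comm, Complex.exp_mul_I]
    simp [← Complex.ofReal_sin, ← Complex.ofReal_cos, hs]
  have heny : exp (-I * (y:ℂ)) = ((Real.cos y : ℝ) : ℂ) := by
    rw [show -I * (y:ℂ) = (-(y:ℂ)) * I by ring, Complex.exp_mul_I]
    simp [← Complex.ofReal_sin, ← Complex.ofReal_cos, hs, Complex.cos_neg, Complex.sin_neg]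
  have habse : ‖exp (-I * (x:ℂ))‖ = 1 := by
    rw [Complex.norm_exp]; simp
  rcases hcos with hc | hc
  · rw [hw, hey, heny, hc] at hw0
    have hex : exp (-I * (x:ℂ)) = (((α - 1)/2 : ℝ) : ℂ) := by
      push_cast
      push_cast at hw0
      linear_combination -hw0 / 2
    rw [hex] at habse
    rw [Complex.norm_real, Real.norm_eq_abs] at habse
    rcases abs_eq (by norm_num : (0:ℝ) ≤ 1) |>.mp habse with h2 | h2
    · exact hα3 (by linarith)
    · linarith
  · rw [hw, hey, heny, hc] at hw0
    push_cast at hw0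
    have : (α : ℂ) = -1 := by linear_combination hw0
    have : α = -1 := by exact_mod_cast this
    linarith

lemma exp_shiftI (k : ℤ) (z : ℂ) :
    exp (I * (z - (k : ℂ) * (2 * Real.pi))) = exp (I * z) := by
  rw [show I * (z - (k : ℂ) * (2 * Real.pi)) = I * z + (-k : ℤ) * (2 * Real.pi * I) by
    push_cast; ring, Complex.exp_add, Complex.exp_int_mul_two_pi_mul_I, mul_one]

lemma exp_shiftnI (k : ℤ) (z : ℂ) :
    exp (-I * (z - (k : ℂ) * (2 * Real.pi))) = exp (-I * z) := by
  rw [show -I * (z - (k : ℂ) * (2 * Real.pi)) = -I * z + (k : ℤ) * (2 * Real.pi * I) by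
    push_cast; ring, Complex.exp_add, Complex.exp_int_mul_two_pi_mul_I, mul_one]

lemma FF_shift (α : ℝ) (k l : ℤ) (u v : ℂ) :
    FF α (u - (k : ℂ) * (2 * Real.pi)) (v - (l : ℂ) * (2 * Real.pi)) = FF α u v := by
  unfold FF
  rw [exp_shiftI, exp_shiftnI, exp_shiftI, exp_shiftnI]

lemma FF_diff1 (α : ℝ) (v : ℂ) : Differentiable ℂ fun u => FF α u v := by
  unfold FF; fun_prop

lemma FF_diff2 (α : ℝ) (u : ℂ) : Differentiable ℂ fun v => FF α u v := by
  unfold FF; fun_prop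

lemma FF_cont (α : ℝ) : Continuous fun p : ℂ × ℂ => FF α p.1 p.2 := by
  unfold FF; fun_prop

lemma FF_real_ne (α : ℝ) (hα : 0 ≤ α) (hα3 : α ≠ 3) (x y : ℝ) :
    FF α x y ≠ 0 := by
  rw [← cast_FF]
  exact_mod_cast ne_of_gt (P_pos α hα hα3 x y)

set_option maxHeartbeats 1000000 in
lemma strip (α : ℝ) (hα : 0 ≤ α) (hα3 : α ≠ 3) :
    ∃ δ : ℝ, 0 < δ ∧ ∃ ε : ℝ, 0 < ε ∧
      ∀ u v : ℂ, |u.im| ≤ δ → |v.im| ≤ δ → ε ≤ ‖FF α u v‖ := by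
  have hπ : (0:ℝ) < Real.pi := Real.pi_pos
  set box : Set ℂ := Set.Icc (0:ℝ) (2*Real.pi) ×ℂ Set.Icc (-1:ℝ) 1 with hbox
  have hboxc : IsCompact box := by
    apply Metric.isCompact_of_isClosed_isBounded
    · exact isClosed_Icc.reProdIm isClosed_Icc
    · exact (Metric.isBounded_Icc _ _).reProdIm (Metric.isBounded_Icc _ _)
  have hKc : IsCompact (box ×ˢ box) := hboxc.prod hboxc
  have hFFc : Continuous fun p : ℂ × ℂ => FF α p.1 p.2 := FF_cont α
  set Z : Set (ℂ × ℂ) := (box ×ˢ box) ∩ ((fun p : ℂ × ℂ => FF α p.1 p.2) ⁻¹' {0}) with hZ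
  have hZc : IsCompact Z := hKc.inter_right (isClosed_singleton.preimage hFFc)
  have hρc : Continuous fun p : ℂ × ℂ => max |p.1.im| |p.2.im| := by fun_prop
  -- get δ₀ > 0 such that no zeros in box×box with max |im| < δ₀
  obtain ⟨δ₀, hδ₀pos, hδ₀⟩ : ∃ δ₀ : ℝ, 0 < δ₀ ∧ ∀ p ∈ Z, δ₀ ≤ max |p.1.im| |p.2.im| := by
    rcases Set.eq_empty_or_nonempty Z with hE | hNE
    · exact ⟨1, one_pos, fun p hp => by rw [hE] at hp; exact absurd hp (Set.notMem_empty p)⟩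
    · obtain ⟨p₀, hp₀Z, hp₀min⟩ := hZc.exists_isMinOn hNE hρc.continuousOn
      refine ⟨max |p₀.1.im| |p₀.2.im|, ?_, fun p hp => hp₀min hp⟩
      by_contra hcon
      push_neg at hcon
      have h1 : |p₀.1.im| = 0 := le_antisymm (le_trans (le_max_left _ _) hcon) (abs_nonneg _)
      have h2 : |p₀.2.im| = 0 := le_antisymm (le_trans (le_max_right _ _) hcon) (abs_nonneg _)
      have e1 : p₀.1 = ((p₀.1.re : ℝ) : ℂ) := Complex.ext rfl (by simpa using abs_eq_zero.mp h1)
      have e2 : p₀.2 = ((p₀.2.re : ℝ) : ℂ) := Complex.ext rfl (by simpa using abs_eq_zero.mp h2)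
      have := hp₀Z.2
      rw [Set.mem_preimage, Set.mem_singleton_iff, e1, e2] at this
      exact FF_real_ne α hα hα3 _ _ this
  set δ : ℝ := min (δ₀/2) 1 with hδ
  have hδpos : 0 < δ := lt_min (by linarith) one_pos
  have hδ1 : δ ≤ 1 := min_le_right _ _
  have hδlt : δ < δ₀ := lt_of_le_of_lt (min_le_left _ _) (by linarith)
  -- small box
  set sbox : Set ℂ := Set.Icc (0:ℝ) (2*Real.pi) ×ℂ Set.Icc (-δ) δ with hsbox
  have hsboxc : IsCompact sbox := by
    apply Metric.isCompact_of_isClosed_isBounded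
    · exact isClosed_Icc.reProdIm isClosed_Icc
    · exact (Metric.isBounded_Icc _ _).reProdIm (Metric.isBounded_Icc _ _)
  have hsub : sbox ⊆ box := by
    intro z hz
    rw [hsbox, Complex.mem_reProdIm] at hz
    rw [hbox, Complex.mem_reProdIm]
    exact ⟨hz.1, ⟨by linarith [hz.2.1], by linarith [hz.2.2]⟩⟩
  have hne : ∀ p : ℂ × ℂ, p.1 ∈ sbox → p.2 ∈ sbox → FF α p.1 p.2 ≠ 0 := by
    intro p h1 h2 h0
    have hpZ : p ∈ Z := ⟨⟨hsub h1, hsub h2⟩, by simpa using h0⟩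
    have := hδ₀ p hpZ
    rw [hsbox, Complex.mem_reProdIm] at h1 h2
    have i1 : |p.1.im| ≤ δ := abs_le.mpr ⟨h1.2.1, h1.2.2⟩
    have i2 : |p.2.im| ≤ δ := abs_le.mpr ⟨h2.2.1, h2.2.2⟩
    have : δ₀ ≤ δ := le_trans this (max_le i1 i2)
    linarith
  -- minimum of |FF| on sbox ×ˢ sbox
  have hsKc : IsCompact (sbox ×ˢ sbox) := hsboxc.prod hsboxc
  have hsne : (sbox ×ˢ sbox).Nonempty := by
    refine ⟨(0, 0), ?_⟩
    constructor <;>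
    · rw [hsbox, Complex.mem_reProdIm]
      constructor
      · simp only [Complex.zero_re, Set.mem_Icc]
        exact ⟨le_refl _, by positivity⟩
      · simp only [Complex.zero_im, Set.mem_Icc]
        exact ⟨by linarith, le_of_lt hδpos⟩
  obtain ⟨q₀, hq₀mem, hq₀min⟩ := hsKc.exists_isMinOn hsne
    (continuous_norm.comp hFFc).continuousOn
  set ε : ℝ := ‖FF α q₀.1 q₀.2‖ with hε
  have hεpos : 0 < ε := by
    rw [hε]
    exact norm_pos_iff.mpr (hne q₀ hq₀mem.1 hq₀mem.2)
  refine ⟨δ, hδpos, ε, hεpos, ?_⟩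
  intro u v hu hv
  -- reduce real parts mod 2π
  have h2π : (0:ℝ) < 2*Real.pi := by linarith
  set k : ℤ := ⌊u.re / (2*Real.pi)⌋ with hk
  set l : ℤ := ⌊v.re / (2*Real.pi)⌋ with hl
  set u' : ℂ := u - (k : ℂ) * (2*Real.pi) with hu'
  set v' : ℂ := v - (l : ℂ) * (2*Real.pi) with hv'
  have hure : u'.re = u.re - k * (2*Real.pi) := by simp [hu']
  have huim : u'.im = u.im := by simp [hu']
  have hvre : v'.re = v.re - l * (2*Real.pi) := by simp [hv']
  have hvim : v'.im = v.im := by simp [hv']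
  have hmemu : u' ∈ sbox := by
    rw [hsbox, Complex.mem_reProdIm, hure, huim]
    have h1 : (k:ℝ) ≤ u.re / (2*Real.pi) := Int.floor_le _
    have h2 : u.re / (2*Real.pi) < k + 1 := Int.lt_floor_add_one _
    have h1' : (k:ℝ) * (2*Real.pi) ≤ u.re := by
      rw [← le_div_iff₀ h2π]; exact h1
    have h2' : u.re < ((k:ℝ) + 1) * (2*Real.pi) := by
      rw [← div_lt_iff₀ h2π]; exact h2
    rcases abs_le.mp hu with ⟨ha, hb⟩
    exact ⟨⟨by linarith, by nlinarith⟩, ⟨ha, hb⟩⟩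
  have hmemv : v' ∈ sbox := by
    rw [hsbox, Complex.mem_reProdIm, hvre, hvim]
    have h1 : (l:ℝ) ≤ v.re / (2*Real.pi) := Int.floor_le _
    have h2 : v.re / (2*Real.pi) < l + 1 := Int.lt_floor_add_one _
    have h1' : (l:ℝ) * (2*Real.pi) ≤ v.re := by
      rw [← le_div_iff₀ h2π]; exact h1
    have h2' : v.re < ((l:ℝ) + 1) * (2*Real.pi) := by
      rw [← div_lt_iff₀ h2π]; exact h2
    rcases abs_le.mp hv with ⟨ha, hb⟩
    exact ⟨⟨by linarith, by nlinarith⟩, ⟨ha, hb⟩⟩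
  have := hq₀min (Set.mk_mem_prod hmemu hmemv)
  simp only [Function.comp] at this
  calc ε ≤ ‖FF α u' v'‖ := this
    _ = ‖FF α u v‖ := by rw [hu', hv', FF_shift]

lemma shift_integral (g : ℂ → ℂ) (s : ℝ)
    (hd : ∀ u : ℂ, u.im ∈ Set.uIcc (0:ℝ) s → DifferentiableAt ℂ g u)
    (hper : ∀ u : ℂ, g (u + 2*Real.pi) = g u) :
    (∫ x in (0:ℝ)..(2*Real.pi), g x) = ∫ x in (0:ℝ)..(2*Real.pi), g ((x:ℂ) + (s:ℂ)*I) := by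
  set w : ℂ := ((2*Real.pi:ℝ):ℂ) + (s:ℂ)*I with hw
  have hre : w.re = 2*Real.pi := by simp [hw]
  have him : w.im = s := by simp [hw]
  have H : DifferentiableOn ℂ g (Set.uIcc (0:ℂ).re w.re ×ℂ Set.uIcc (0:ℂ).im w.im) := by
    intro u hu
    apply (hd u ?_).differentiableWithinAt
    rw [Complex.mem_reProdIm] at hu
    simpa [him] using hu.2
  have key := Complex.integral_boundary_rect_eq_zero_of_differentiableOn g 0 w H
  simp only [Complex.zero_re, Complex.zero_im, hre, him] at key
  have hvert : ∀ y : ℝ, g ((2*Real.pi:ℝ) + (y:ℂ)*I) = g (0 + (y:ℂ)*I) := by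
    intro y
    rw [zero_add, ← hper ((y:ℂ)*I)]
    congr 1
    push_cast
    ring
  simp only [hvert, smul_eq_mul] at key
  simp only [Complex.ofReal_zero, zero_mul, add_zero] at key
  linear_combination key

lemma exp_perI (z : ℂ) : exp (I * (z + 2*Real.pi)) = exp (I * z) := by
  rw [mul_add, Complex.exp_add, show I * (2*(Real.pi:ℂ)) = 2*Real.pi*I by ring,
    Complex.exp_two_pi_mul_I, mul_one]

lemma exp_pernI (z : ℂ) : exp (-I * (z + 2*Real.pi)) = exp (-I * z) := by
  rw [mul_add, Complex.exp_add,
    show -I * (2*(Real.pi:ℂ)) = ((-1 : ℤ) : ℂ) * (2*Real.pi*I) by push_cast; ring,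
    Complex.exp_int_mul_two_pi_mul_I, mul_one]

lemma FF_per1 (α : ℝ) (u v : ℂ) : FF α (u + 2*Real.pi) v = FF α u v := by
  unfold FF; rw [exp_perI, exp_pernI]

lemma FF_per2 (α : ℝ) (u v : ℂ) : FF α u (v + 2*Real.pi) = FF α u v := by
  unfold FF; rw [exp_perI, exp_pernI]

lemma num_per2 (m n : ℤ) (u v : ℂ) :
    exp (-I * ((m:ℂ)*u + (n:ℂ)*(v + 2*Real.pi))) = exp (-I * ((m:ℂ)*u + (n:ℂ)*v)) := by
  rw [show -I * ((m:ℂ)*u + (n:ℂ)*(v + 2*Real.pi))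
      = -I * ((m:ℂ)*u + (n:ℂ)*v) + ((-n : ℤ) : ℂ) * (2*Real.pi*I) by push_cast; ring,
    Complex.exp_add, Complex.exp_int_mul_two_pi_mul_I, mul_one]

lemma num_per1 (m n : ℤ) (u v : ℂ) :
    exp (-I * ((m:ℂ)*(u + 2*Real.pi) + (n:ℂ)*v)) = exp (-I * ((m:ℂ)*u + (n:ℂ)*v)) := by
  rw [show -I * ((m:ℂ)*(u + 2*Real.pi) + (n:ℂ)*v)
      = -I * ((m:ℂ)*u + (n:ℂ)*v) + ((-m : ℤ) : ℂ) * (2*Real.pi*I) by push_cast; ring,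
    Complex.exp_add, Complex.exp_int_mul_two_pi_mul_I, mul_one]


set_option maxHeartbeats 2000000 in
/-- Off the critical point (`α ≥ 0`, `α ≠ 3`), the Fourier coefficients of the
reciprocal of the band dispersion
`P(e^{ik_x}, e^{ik_y}) = 4 sin²(k_y) + |α − e^{ik_y} − e^{−ik_x} − e^{−ik_x}e^{−ik_y}|²`
decay exponentially: this is the exponential decay of the entries of the inverse
Kasteleyn matrix (the real-space Green's function) in the infinite-size periodic limit,
implying exponential decay of all dimer-dimer correlators for `α ≠ 3`. -/
theorem stmt_16 (α : ℝ) (hα : 0 ≤ α) (hα3 : α ≠ 3) :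
    ∃ C : ℝ, 0 ≤ C ∧ ∃ c : ℝ, 0 < c ∧ ∀ m n : ℤ,
      ‖((1 / (4 * Real.pi ^ 2) : ℂ) *
          ∫ kx in (0 : ℝ)..(2 * Real.pi), ∫ ky in (0 : ℝ)..(2 * Real.pi),
            exp (-I * ((m : ℂ) * kx + (n : ℂ) * ky)) /
              ((4 * Real.sin ky ^ 2
                + ‖((α : ℂ) - exp (I * ky) - exp (-I * kx)
                    - exp (-I * kx) * exp (-I * ky))‖ ^ 2 : ℝ) : ℂ))‖
        ≤ C * Real.exp (-c * (|(m : ℝ)| + |(n : ℝ)|)) := by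
  obtain ⟨δ, hδpos, ε, hεpos, hF⟩ := strip α hα hα3
  have hπ : (0:ℝ) < Real.pi := Real.pi_pos
  refine ⟨1/ε, by positivity, δ, hδpos, ?_⟩
  intro m n
  have hFne : ∀ u v : ℂ, |u.im| ≤ δ → |v.im| ≤ δ → FF α u v ≠ 0 := by
    intro u v h1 h2 h0
    have := hF u v h1 h2
    rw [h0, norm_zero] at this
    linarith
  set sm : ℝ := if 0 ≤ m then -δ else δ with hsm
  set sn : ℝ := if 0 ≤ n then -δ else δ with hsn
  have hsm_le : -δ ≤ sm ∧ sm ≤ δ := by rw [hsm]; split_ifs <;> constructor <;> linarith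
  have hsn_le : -δ ≤ sn ∧ sn ≤ δ := by rw [hsn]; split_ifs <;> constructor <;> linarith
  have hmem_sm : ∀ r : ℝ, r ∈ Set.uIcc (0:ℝ) sm → |r| ≤ δ := by
    intro r hr
    rw [Set.mem_uIcc] at hr
    rcases hr with ⟨h1, h2⟩ | ⟨h1, h2⟩ <;> rw [abs_le] <;>
      exact ⟨by linarith [hsm_le.1], by linarith [hsm_le.2]⟩
  have hmem_sn : ∀ r : ℝ, r ∈ Set.uIcc (0:ℝ) sn → |r| ≤ δ := by
    intro r hr
    rw [Set.mem_uIcc] at hr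
    rcases hr with ⟨h1, h2⟩ | ⟨h1, h2⟩ <;> rw [abs_le] <;>
      exact ⟨by linarith [hsn_le.1], by linarith [hsn_le.2]⟩
  have him_r : ∀ x : ℝ, |(x:ℂ).im| ≤ δ := by intro x; simp; linarith
  have him_sh : ∀ (x s : ℝ), ((x:ℂ) + (s:ℂ)*I).im = s := by intro x s; simp
  -- step 0: rewrite denominators
  simp only [cast_FF]
  -- step 1: shift in ky
  have step1 : (∫ kx in (0:ℝ)..(2*Real.pi), ∫ ky in (0:ℝ)..(2*Real.pi),
        exp (-I * ((m:ℂ)*kx + (n:ℂ)*ky)) / FF α kx ky)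
      = ∫ kx in (0:ℝ)..(2*Real.pi), ∫ t in (0:ℝ)..(2*Real.pi),
        exp (-I * ((m:ℂ)*kx + (n:ℂ)*((t:ℂ) + (sn:ℂ)*I))) / FF α kx ((t:ℂ) + (sn:ℂ)*I) := by
    apply intervalIntegral.integral_congr
    intro x _
    exact shift_integral (fun v => exp (-I * ((m:ℂ)*(x:ℂ) + (n:ℂ)*v)) / FF α x v) sn
      (fun u hu => DifferentiableAt.div (by fun_prop) ((FF_diff2 α x) u)
        (hFne _ _ (him_r x) (hmem_sn _ hu)))
      (fun u => by beta_reduce; rw [num_per2, FF_per2])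
  -- step 2: Fubini
  have hcont : Continuous fun p : ℝ × ℝ =>
      exp (-I * ((m:ℂ)*(p.1:ℂ) + (n:ℂ)*((p.2:ℂ) + (sn:ℂ)*I))) / FF α p.1 ((p.2:ℂ) + (sn:ℂ)*I) := by
    apply Continuous.div
    · fun_prop
    · show Continuous fun p : ℝ × ℝ => FF α p.1 ((p.2:ℂ) + (sn:ℂ)*I)
      unfold FF; fun_prop
    · intro p
      apply hFne
      · exact him_r p.1
      · rw [him_sh]
        rw [abs_le]; exact hsn_le
  have step2 : (∫ kx in (0:ℝ)..(2*Real.pi), ∫ t in (0:ℝ)..(2*Real.pi),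
        exp (-I * ((m:ℂ)*kx + (n:ℂ)*((t:ℂ) + (sn:ℂ)*I))) / FF α kx ((t:ℂ) + (sn:ℂ)*I))
      = ∫ t in (0:ℝ)..(2*Real.pi), ∫ kx in (0:ℝ)..(2*Real.pi),
        exp (-I * ((m:ℂ)*kx + (n:ℂ)*((t:ℂ) + (sn:ℂ)*I))) / FF α kx ((t:ℂ) + (sn:ℂ)*I) := by
    have h2π : (0:ℝ) ≤ 2*Real.pi := by linarith
    simp only [intervalIntegral.integral_of_le h2π]
    have hInt : MeasureTheory.Integrable
        (Function.uncurry fun x t : ℝ =>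
          exp (-I * ((m:ℂ)*(x:ℂ) + (n:ℂ)*((t:ℂ) + (sn:ℂ)*I))) / FF α x ((t:ℂ) + (sn:ℂ)*I))
        ((MeasureTheory.volume.restrict (Set.Ioc (0:ℝ) (2*Real.pi))).prod
          (MeasureTheory.volume.restrict (Set.Ioc (0:ℝ) (2*Real.pi)))) := by
      rw [MeasureTheory.Measure.prod_restrict, ← MeasureTheory.Measure.volume_eq_prod]
      exact (hcont.continuousOn.integrableOn_compact
        (isCompact_Icc.prod isCompact_Icc)).mono_set
        (Set.prod_mono Set.Ioc_subset_Icc_self Set.Ioc_subset_Icc_self)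
    exact MeasureTheory.integral_integral_swap hInt
  -- step 3: shift in kx
  have step3 : (∫ t in (0:ℝ)..(2*Real.pi), ∫ kx in (0:ℝ)..(2*Real.pi),
        exp (-I * ((m:ℂ)*kx + (n:ℂ)*((t:ℂ) + (sn:ℂ)*I))) / FF α kx ((t:ℂ) + (sn:ℂ)*I))
      = ∫ t in (0:ℝ)..(2*Real.pi), ∫ x in (0:ℝ)..(2*Real.pi),
        exp (-I * ((m:ℂ)*((x:ℂ) + (sm:ℂ)*I) + (n:ℂ)*((t:ℂ) + (sn:ℂ)*I)))
          / FF α ((x:ℂ) + (sm:ℂ)*I) ((t:ℂ) + (sn:ℂ)*I) := by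
    apply intervalIntegral.integral_congr
    intro t _
    have himv : |((t:ℂ) + (sn:ℂ)*I).im| ≤ δ := by rw [him_sh, abs_le]; exact hsn_le
    exact shift_integral
      (fun u => exp (-I * ((m:ℂ)*u + (n:ℂ)*((t:ℂ) + (sn:ℂ)*I))) / FF α u ((t:ℂ) + (sn:ℂ)*I)) sm
      (fun u hu => DifferentiableAt.div (by fun_prop) ((FF_diff1 α _) u)
        (hFne _ _ (hmem_sm _ hu) himv))
      (fun u => by beta_reduce; rw [num_per1, FF_per1])
  rw [step1, step2, step3]
  -- step 4: bound
  have hbound : ∀ x t : ℝ,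
      ‖exp (-I * ((m:ℂ)*((x:ℂ) + (sm:ℂ)*I) + (n:ℂ)*((t:ℂ) + (sn:ℂ)*I)))
          / FF α ((x:ℂ) + (sm:ℂ)*I) ((t:ℂ) + (sn:ℂ)*I)‖
        ≤ Real.exp (-δ * (|(m:ℝ)| + |(n:ℝ)|)) / ε := by
    intro x t
    rw [norm_div]
    have hnum : ‖exp (-I * ((m:ℂ)*((x:ℂ) + (sm:ℂ)*I) + (n:ℂ)*((t:ℂ) + (sn:ℂ)*I)))‖
        = Real.exp ((m:ℝ)*sm + (n:ℝ)*sn) := by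
      rw [Complex.norm_exp]
      congr 1
      simp
    have hexp_eq : (m:ℝ)*sm + (n:ℝ)*sn = -δ * (|(m:ℝ)| + |(n:ℝ)|) := by
      have habsm : ∀ h : 0 ≤ m, |(m:ℝ)| = (m:ℝ) :=
        fun h => abs_of_nonneg (by exact_mod_cast h)
      have habsm' : ∀ h : m < 0, |(m:ℝ)| = -(m:ℝ) :=
        fun h => abs_of_neg (by exact_mod_cast h)
      have habsn : ∀ h : 0 ≤ n, |(n:ℝ)| = (n:ℝ) :=
        fun h => abs_of_nonneg (by exact_mod_cast h)
      have habsn' : ∀ h : n < 0, |(n:ℝ)| = -(n:ℝ) :=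
        fun h => abs_of_neg (by exact_mod_cast h)
      rcases le_or_gt 0 m with hm | hm <;> rcases le_or_gt 0 n with hn | hn
      · rw [hsm, hsn, if_pos hm, if_pos hn, habsm hm, habsn hn]; ring
      · rw [hsm, hsn, if_pos hm, if_neg (not_le.mpr hn), habsm hm, habsn' hn]; ring
      · rw [hsm, hsn, if_neg (not_le.mpr hm), if_pos hn, habsm' hm, habsn hn]; ring
      · rw [hsm, hsn, if_neg (not_le.mpr hm), if_neg (not_le.mpr hn), habsm' hm, habsn' hn]; ring
    rw [hnum, hexp_eq]
    apply div_le_div₀ (Real.exp_nonneg _) (le_refl _) hεpos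
    apply hF
    · rw [him_sh, abs_le]; exact hsm_le
    · rw [him_sh, abs_le]; exact hsn_le
  -- final estimate
  set E : ℝ := Real.exp (-δ * (|(m:ℝ)| + |(n:ℝ)|)) with hE
  have hEpos : 0 < E := Real.exp_pos _
  have h2πabs : |2*Real.pi - 0| = 2*Real.pi := by rw [sub_zero]; exact abs_of_pos (by linarith)
  have hin : ∀ t : ℝ, ‖∫ x in (0:ℝ)..(2*Real.pi),
      exp (-I * ((m:ℂ)*((x:ℂ) + (sm:ℂ)*I) + (n:ℂ)*((t:ℂ) + (sn:ℂ)*I)))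
        / FF α ((x:ℂ) + (sm:ℂ)*I) ((t:ℂ) + (sn:ℂ)*I)‖ ≤ (E/ε) * (2*Real.pi) := by
    intro t
    have h := intervalIntegral.norm_integral_le_of_norm_le_const (a := (0:ℝ))
      (b := 2*Real.pi) (C := E/ε)
      (f := fun x : ℝ => exp (-I * ((m:ℂ)*((x:ℂ) + (sm:ℂ)*I) + (n:ℂ)*((t:ℂ) + (sn:ℂ)*I)))
          / FF α ((x:ℂ) + (sm:ℂ)*I) ((t:ℂ) + (sn:ℂ)*I))
      (fun x _ => by exact hbound x t)
    rw [h2πabs] at h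
    exact h
  have hout : ‖∫ t in (0:ℝ)..(2*Real.pi), ∫ x in (0:ℝ)..(2*Real.pi),
      exp (-I * ((m:ℂ)*((x:ℂ) + (sm:ℂ)*I) + (n:ℂ)*((t:ℂ) + (sn:ℂ)*I)))
        / FF α ((x:ℂ) + (sm:ℂ)*I) ((t:ℂ) + (sn:ℂ)*I)‖ ≤ ((E/ε) * (2*Real.pi)) * (2*Real.pi) := by
    have h := intervalIntegral.norm_integral_le_of_norm_le_const (a := (0:ℝ))
      (b := 2*Real.pi) (C := (E/ε) * (2*Real.pi))
      (f := fun t : ℝ => ∫ x in (0:ℝ)..(2*Real.pi),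
        exp (-I * ((m:ℂ)*((x:ℂ) + (sm:ℂ)*I) + (n:ℂ)*((t:ℂ) + (sn:ℂ)*I)))
          / FF α ((x:ℂ) + (sm:ℂ)*I) ((t:ℂ) + (sn:ℂ)*I))
      (fun t _ => hin t)
    rw [h2πabs] at h
    exact h
  rw [norm_mul]
  have hc : ‖((1 / (4 * Real.pi ^ 2) : ℂ))‖ = 1/(4*Real.pi^2) := by
    rw [show ((1 / (4 * Real.pi ^ 2)) : ℂ) = (((1 / (4 * Real.pi ^ 2) : ℝ)) : ℂ) by push_cast; ring,
      Complex.norm_real, Real.norm_eq_abs, abs_of_pos (by positivity)]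
  rw [hc]
  calc 1/(4*Real.pi^2) * ‖(∫ t in (0:ℝ)..(2*Real.pi), ∫ x in (0:ℝ)..(2*Real.pi),
        exp (-I * ((m:ℂ)*((x:ℂ) + (sm:ℂ)*I) + (n:ℂ)*((t:ℂ) + (sn:ℂ)*I)))
          / FF α ((x:ℂ) + (sm:ℂ)*I) ((t:ℂ) + (sn:ℂ)*I))‖
      ≤ 1/(4*Real.pi^2) * (((E/ε) * (2*Real.pi)) * (2*Real.pi)) := by
        apply mul_le_mul_of_nonneg_left _ (by positivity)
        exact hout
    _ = 1/ε * E := by field_simp; ring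
end

section
/- Let κ > 0 and α ∈ ℝ with α ≥ 3·e^κ, and let θ, φ, u, v ∈ ℝ with |u| + |v| ≤ κ. Then the characteristic polynomial evaluated at w = e^{iθ}·e^{−u} and z = e^{iφ}·e^{−v} satisfies the lower bound |P(e^{iθ}e^{−u}, e^{iφ}e^{−v})| ≥ (α − 3e^κ)² − 2 − 2e^{2κ}. (This bound shows that for large α the band dispersion has no complex zeros in the strip |u| + |v| ≤ κ with κ = (1−δ)·log((α−1)/2), which determines the large-α correlation length ξ_G ∼ 1/log((α−1)/2).) -/
open Complex

/-- Lower bound for the characteristic polynomial at complexified momenta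
`w = e^{iθ}e^{−u}`, `z = e^{iφ}e^{−v}` with `|u| + |v| ≤ κ` and `α ≥ 3e^κ`:
`|P(w, z)| ≥ (α − 3e^κ)² − 2 − 2e^{2κ}`. This shows that for large `α` the band
dispersion has no complex zeros in the strip `|u| + |v| ≤ κ` with
`κ = (1−δ)·log((α−1)/2)`, determining the large-`α` correlation length
`ξ_G ∼ 1/log((α−1)/2)`. -/
theorem stmt_17 (κ : ℝ) (hκ : 0 < κ) (α : ℝ) (hα : 3 * Real.exp κ ≤ α)
    (θ φ u v : ℝ) (huv : |u| + |v| ≤ κ) :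
    (α - 3 * Real.exp κ) ^ 2 - 2 - 2 * Real.exp (2 * κ)
      ≤ ‖(
          -(((exp (I * φ) * Real.exp (-v)) - (exp (I * φ) * Real.exp (-v))⁻¹) ^ 2)
          + ((α : ℂ) - exp (I * φ) * Real.exp (-v)
              - (exp (I * θ) * (Real.exp (-u) : ℝ))⁻¹
              - (exp (I * φ) * Real.exp (-v))⁻¹ * (exp (I * θ) * (Real.exp (-u) : ℝ))⁻¹)
            * ((α : ℂ) - exp (I * θ) * Real.exp (-u)
                - (exp (I * φ) * (Real.exp (-v) : ℝ))⁻¹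
                - exp (I * φ) * Real.exp (-v) * (exp (I * θ) * Real.exp (-u))))‖ := by
  set w : ℂ := exp (I * θ) * (Real.exp (-u) : ℝ) with hw
  set z : ℂ := exp (I * φ) * (Real.exp (-v) : ℝ) with hz
  have hu : |u| ≤ κ := le_trans (le_add_of_nonneg_right (abs_nonneg v)) huv
  have hv : |v| ≤ κ := le_trans (le_add_of_nonneg_left (abs_nonneg u)) huv
  have hnw : ‖w‖ = Real.exp (-u) := by
    simp [hw, map_mul, Complex.norm_exp, Real.abs_exp]
  have hnz : ‖z‖ = Real.exp (-v) := by
    simp [hz, map_mul, Complex.norm_exp, Real.abs_exp]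
  have hnwi : ‖w⁻¹‖ = Real.exp u := by
    rw [norm_inv, hnw, ← Real.exp_neg, neg_neg]
  have hnzi : ‖z⁻¹‖ = Real.exp v := by
    rw [norm_inv, hnz, ← Real.exp_neg, neg_neg]
  have e1 : Real.exp (-v) ≤ Real.exp κ :=
    Real.exp_le_exp.2 (le_trans (neg_le_abs v) hv)
  have e2 : Real.exp v ≤ Real.exp κ := Real.exp_le_exp.2 (le_trans (le_abs_self v) hv)
  have e3 : Real.exp (-u) ≤ Real.exp κ :=
    Real.exp_le_exp.2 (le_trans (neg_le_abs u) hu)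
  have e4 : Real.exp u ≤ Real.exp κ := Real.exp_le_exp.2 (le_trans (le_abs_self u) hu)
  have e5 : Real.exp (v + u) ≤ Real.exp κ := by
    apply Real.exp_le_exp.2
    calc v + u ≤ |v| + |u| := add_le_add (le_abs_self v) (le_abs_self u)
    _ ≤ κ := by rw [add_comm]; exact huv
  have e6 : Real.exp (-v + -u) ≤ Real.exp κ := by
    apply Real.exp_le_exp.2
    calc -v + -u ≤ |v| + |u| := add_le_add (neg_le_abs v) (neg_le_abs u)
    _ ≤ κ := by rw [add_comm]; exact huv
  have hαnorm : ‖(α : ℂ)‖ = α := by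
    rw [Complex.norm_real, Real.norm_eq_abs]
    exact abs_of_nonneg (by nlinarith [Real.exp_pos κ])
  have hA : α - 3 * Real.exp κ ≤ ‖(α : ℂ) - z - w⁻¹ - z⁻¹ * w⁻¹‖ := by
    have h1 : ‖(α:ℂ) - z‖ ≥ α - Real.exp κ := by
      calc ‖(α:ℂ) - z‖ ≥ ‖(α:ℂ)‖ - ‖z‖ := norm_sub_norm_le _ _
      _ ≥ α - Real.exp κ := by rw [hαnorm, hnz]; linarith
    have h2 : ‖(α:ℂ) - z - w⁻¹‖ ≥ α - 2 * Real.exp κ := by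
      calc ‖(α:ℂ) - z - w⁻¹‖ ≥ ‖(α:ℂ) - z‖ - ‖w⁻¹‖ := norm_sub_norm_le _ _
      _ ≥ α - 2 * Real.exp κ := by rw [hnwi]; linarith
    calc ‖(α:ℂ) - z - w⁻¹ - z⁻¹ * w⁻¹‖ ≥ ‖(α:ℂ) - z - w⁻¹‖ - ‖z⁻¹ * w⁻¹‖ :=
          norm_sub_norm_le _ _
    _ ≥ α - 3 * Real.exp κ := by
        rw [norm_mul, hnzi, hnwi, ← Real.exp_add]; linarith
  have hB : α - 3 * Real.exp κ ≤ ‖(α : ℂ) - w - z⁻¹ - z * w‖ := by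
    have h1 : ‖(α:ℂ) - w‖ ≥ α - Real.exp κ := by
      calc ‖(α:ℂ) - w‖ ≥ ‖(α:ℂ)‖ - ‖w‖ := norm_sub_norm_le _ _
      _ ≥ α - Real.exp κ := by rw [hαnorm, hnw]; linarith
    have h2 : ‖(α:ℂ) - w - z⁻¹‖ ≥ α - 2 * Real.exp κ := by
      calc ‖(α:ℂ) - w - z⁻¹‖ ≥ ‖(α:ℂ) - w‖ - ‖z⁻¹‖ := norm_sub_norm_le _ _
      _ ≥ α - 2 * Real.exp κ := by rw [hnzi]; linarith
    calc ‖(α:ℂ) - w - z⁻¹ - z * w‖ ≥ ‖(α:ℂ) - w - z⁻¹‖ - ‖z * w‖ := norm_sub_norm_le _ _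
    _ ≥ α - 3 * Real.exp κ := by
        rw [norm_mul, hnz, hnw, ← Real.exp_add]; linarith
  have hsq : ‖(z - z⁻¹) ^ 2‖ ≤ 2 + 2 * Real.exp (2 * κ) := by
    have h1 : ‖z - z⁻¹‖ ≤ Real.exp (-v) + Real.exp v := by
      calc ‖z - z⁻¹‖ ≤ ‖z‖ + ‖z⁻¹‖ := norm_sub_le _ _
      _ = Real.exp (-v) + Real.exp v := by rw [hnz, hnzi]
    have h2 : ‖(z - z⁻¹) ^ 2‖ = ‖z - z⁻¹‖ ^ 2 := by rw [norm_pow]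
    have h3 : Real.exp (-(2*v)) + Real.exp (2*v) ≤ 2 * Real.exp (2 * κ) := by
      have := Real.exp_le_exp.2 (show -(2*v) ≤ 2*κ by
        rcases abs_cases v with ⟨h,_⟩|⟨h,_⟩ <;> linarith)
      have := Real.exp_le_exp.2 (show 2*v ≤ 2*κ by
        rcases abs_cases v with ⟨h,_⟩|⟨h,_⟩ <;> linarith)
      linarith
    rw [h2]
    calc ‖z - z⁻¹‖ ^ 2 ≤ (Real.exp (-v) + Real.exp v) ^ 2 := by
          apply pow_le_pow_left₀ (norm_nonneg _) h1
    _ = Real.exp (-(2*v)) + 2 + Real.exp (2*v) := by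
          have a : Real.exp (-v) * Real.exp (-v) = Real.exp (-(2*v)) := by
            rw [← Real.exp_add]; ring_nf
          have b : Real.exp v * Real.exp v = Real.exp (2*v) := by
            rw [← Real.exp_add]; ring_nf
          have c : Real.exp (-v) * Real.exp v = 1 := by
            rw [← Real.exp_add]; simp
          linear_combination a + b + 2*c
    _ ≤ 2 + 2 * Real.exp (2 * κ) := by linarith
  have key : ‖-((z - z⁻¹) ^ 2) + ((α:ℂ) - z - w⁻¹ - z⁻¹ * w⁻¹) * ((α:ℂ) - w - z⁻¹ - z * w)‖
      ≥ ‖((α:ℂ) - z - w⁻¹ - z⁻¹ * w⁻¹) * ((α:ℂ) - w - z⁻¹ - z * w)‖ - ‖(z - z⁻¹) ^ 2‖ := by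
    rw [neg_add_eq_sub]
    exact norm_sub_norm_le _ _
  have hprod : (α - 3 * Real.exp κ) ^ 2
      ≤ ‖((α:ℂ) - z - w⁻¹ - z⁻¹ * w⁻¹) * ((α:ℂ) - w - z⁻¹ - z * w)‖ := by
    rw [norm_mul, sq]
    have h0 : 0 ≤ α - 3 * Real.exp κ := by linarith
    exact mul_le_mul hA hB h0 (norm_nonneg _)
  linarith [key, hprod, hsq]
end
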